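/- arXiv:1811.06180 — 5 statements merged into one kernel-verified Lean document; each statement's English description precedes it below -/
import Mathlib

section
/- Define ω_n recursively by ω_0 = 1 and, for n ≥ 1, ∑_{k=0}^{n} (-1)^k C(n,k)^2 ω_k = 0. Then ω_n equals the number of pairs (σ, τ) of permutations of {1,...,n} having no common ascent, where i ∈ {1,...,n-1} is a common ascent if σ(i) < σ(i+1) and τ(i) < τ(i+1). -/
open Finset

/-- A common ascent of a pair of permutations of `{1,...,n}`:
an index `i` with `i+1 = j ≤ n` such that both permutations increase from `i` to `j`. -/
def CommonAscent {n : ℕ} (σ τ : Equiv.Perm (Fin n)) : Prop :=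
  ∃ i j : Fin n, (i : ℕ) + 1 = (j : ℕ) ∧ σ i < σ j ∧ τ i < τ j

instance {n : ℕ} : DecidablePred
    (fun p : Equiv.Perm (Fin n) × Equiv.Perm (Fin n) => CommonAscent p.1 p.2) := fun _ => by
  unfold CommonAscent; infer_instance

/-- The number of inversions of a permutation. -/
def inversions {n : ℕ} (σ : Equiv.Perm (Fin n)) : ℕ :=
  (Finset.univ.filter (fun p : Fin n × Fin n => p.1 < p.2 ∧ σ p.2 < σ p.1)).card

/-- `W n = ∑ q^(inv σ + inv τ)` over pairs of permutations with no common ascent,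
as a polynomial in `q`. -/
noncomputable def W (n : ℕ) : Polynomial ℚ :=
  ∑ p ∈ Finset.univ.filter
      (fun p : Equiv.Perm (Fin n) × Equiv.Perm (Fin n) => ¬ CommonAscent p.1 p.2),
    Polynomial.X ^ (inversions p.1 + inversions p.2)


open Equiv

variable {n : ℕ}

/-- both coordinates increasing from position `k` on. -/
def SuffIncr (k : ℕ) (σ : Perm (Fin n)) : Prop :=
  ∀ i j : Fin n, (i : ℕ) + 1 = (j : ℕ) → k ≤ (i : ℕ) → σ i < σ j

/-- no common ascent strictly inside the first `k` positions. -/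
def PrefNoCA (k : ℕ) (σ τ : Perm (Fin n)) : Prop :=
  ∀ i j : Fin n, (i : ℕ) + 1 = (j : ℕ) → (j : ℕ) < k → ¬ (σ i < σ j ∧ τ i < τ j)

def ValidCut (k : ℕ) (p : Perm (Fin n) × Perm (Fin n)) : Prop :=
  PrefNoCA k p.1 p.2 ∧ SuffIncr k p.1 ∧ SuffIncr k p.2

instance (k : ℕ) (σ : Perm (Fin n)) : Decidable (SuffIncr k σ) := by
  unfold SuffIncr; infer_instance

instance (k : ℕ) (σ τ : Perm (Fin n)) : Decidable (PrefNoCA k σ τ) := by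
  unfold PrefNoCA; infer_instance

instance (k : ℕ) (p : Perm (Fin n) × Perm (Fin n)) : Decidable (ValidCut k p) := by
  unfold ValidCut; infer_instance

def noCA (n : ℕ) : Finset (Perm (Fin n) × Perm (Fin n)) :=
  univ.filter fun p => ¬ CommonAscent p.1 p.2

lemma SuffIncr.mono {k k' : ℕ} {σ : Perm (Fin n)} (h : SuffIncr k σ) (hkk : k ≤ k') :
    SuffIncr k' σ := fun i j hij hk => h i j hij (le_trans hkk hk)

lemma PrefNoCA.anti {k k' : ℕ} {σ τ : Perm (Fin n)} (h : PrefNoCA k' σ τ) (hkk : k ≤ k') :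
    PrefNoCA k σ τ := fun i j hij hk => h i j hij (lt_of_lt_of_le hk hkk)

lemma suffIncr_lt_aux {k : ℕ} {σ : Perm (Fin n)} (h : SuffIncr k σ) :
    ∀ d (i j : Fin n), k ≤ (i:ℕ) → (j:ℕ) = (i:ℕ) + d + 1 → σ i < σ j := by
  intro d
  induction d with
  | zero => exact fun i j hki hd => h i j (by omega) hki
  | succ d ih =>
    intro i j hki hd
    have hm : (i:ℕ) + d + 1 < n := by have := j.isLt; omega
    exact lt_trans (ih i ⟨(i:ℕ)+d+1, hm⟩ hki (by simp))
      (h ⟨(i:ℕ)+d+1, hm⟩ j (by simp; omega) (by simp; omega))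

lemma SuffIncr.lt {k : ℕ} {σ : Perm (Fin n)} (h : SuffIncr k σ) (i j : Fin n)
    (hki : k ≤ (i:ℕ)) (hij : (i:ℕ) < (j:ℕ)) : σ i < σ j := by
  obtain ⟨d, hd⟩ : ∃ d, (j:ℕ) = (i:ℕ) + d + 1 := ⟨(j:ℕ) - (i:ℕ) - 1, by omega⟩
  exact suffIncr_lt_aux h d i j hki hd

lemma sum_valid (hn : 1 ≤ n) (p : Perm (Fin n) × Perm (Fin n)) :
    ∑ k ∈ Finset.range (n+1), (if ValidCut k p then ((-1:ℚ))^k else 0) = 0 := by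
  obtain ⟨σ, τ⟩ := p
  have hex : ∃ k, SuffIncr k σ ∧ SuffIncr k τ :=
    ⟨n, fun i j hij hk => absurd i.isLt (by omega), fun i j hij hk => absurd i.isLt (by omega)⟩
  set A := Nat.find hex with hAdef
  have hspec : SuffIncr A σ ∧ SuffIncr A τ := Nat.find_spec hex
  have hAle : A ≤ n - 1 := Nat.find_le
    ⟨fun i j hij hk => absurd (And.intro i.isLt j.isLt) (by omega),
     fun i j hij hk => absurd (And.intro i.isLt j.isLt) (by omega)⟩
  -- any valid cut is ≤ A+1
  have claim2 : ∀ k, k ≤ n → ValidCut k (σ, τ) → k ≤ A + 1 := by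
    intro k hkn hv
    by_contra hcon
    push_neg at hcon
    have hn2 : 2 ≤ k := by omega
    have hi : k - 2 < n := by omega
    have hj : k - 1 < n := by omega
    have h1 : σ ⟨k-2, hi⟩ < σ ⟨k-1, hj⟩ := hspec.1 ⟨k-2, hi⟩ ⟨k-1, hj⟩ (by simp; omega) (by simp; omega)
    have h2 : τ ⟨k-2, hi⟩ < τ ⟨k-1, hj⟩ := hspec.2 ⟨k-2, hi⟩ ⟨k-1, hj⟩ (by simp; omega) (by simp; omega)
    exact hv.1 ⟨k-2, hi⟩ ⟨k-1, hj⟩ (by simp; omega) (by simp; omega) ⟨h1, h2⟩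
  -- valid at A iff valid at A+1
  have claim3 : ValidCut A (σ, τ) ↔ ValidCut (A+1) (σ, τ) := by
    constructor
    · rintro ⟨hpre, -, -⟩
      refine ⟨?_, hspec.1.mono (by omega), hspec.2.mono (by omega)⟩
      intro i j hij hjk hcontra
      rcases Nat.lt_or_ge (j:ℕ) A with hjA | hjA
      · exact hpre i j hij hjA hcontra
      · have hjA' : (j:ℕ) = A := by omega
        have hA1 : 1 ≤ A := by omega
        refine Nat.find_min hex (m := A - 1) (by omega) ⟨?_, ?_⟩
        · intro i' j' hij' hk'
          rcases Nat.lt_or_ge (i':ℕ) A with hiA | hiA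
          · have : i' = i := Fin.ext (by omega)
            subst this
            have : j' = j := Fin.ext (by omega)
            subst this
            exact hcontra.1
          · exact hspec.1 i' j' hij' hiA
        · intro i' j' hij' hk'
          rcases Nat.lt_or_ge (i':ℕ) A with hiA | hiA
          · have : i' = i := Fin.ext (by omega)
            subst this
            have : j' = j := Fin.ext (by omega)
            subst this
            exact hcontra.2
          · exact hspec.2 i' j' hij' hiA
    · rintro ⟨hpre, -, -⟩
      exact ⟨hpre.anti (by omega), hspec.1, hspec.2⟩
  rw [← Finset.sum_filter]
  by_cases hA0 : ValidCut A (σ, τ)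
  · have hfil : (Finset.range (n+1)).filter (fun k => ValidCut k (σ,τ)) = {A, A+1} := by
      ext k
      simp only [mem_filter, mem_range, mem_insert, mem_singleton]
      constructor
      · rintro ⟨hk, hv⟩
        have h1 : A ≤ k := Nat.find_le ⟨hv.2.1, hv.2.2⟩
        have h2 : k ≤ A + 1 := claim2 k (by omega) hv
        omega
      · rintro (rfl | rfl)
        · exact ⟨by omega, hA0⟩
        · exact ⟨by omega, claim3.mp hA0⟩
    rw [hfil, Finset.sum_pair (by omega : A ≠ A + 1), pow_succ]
    ring
  · have hfil : (Finset.range (n+1)).filter (fun k => ValidCut k (σ,τ)) = ∅ := by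
      ext k
      simp only [mem_filter, mem_range, notMem_empty, iff_false, not_and]
      intro hk hv
      have h1 : A ≤ k := Nat.find_le ⟨hv.2.1, hv.2.2⟩
      have h2 : k ≤ A + 1 := claim2 k (by omega) hv
      rcases Nat.eq_or_lt_of_le h1 with rfl | h1'
      · exact hA0 hv
      · have : k = A + 1 := by omega
        subst this
        exact hA0 (claim3.mpr hv)
    rw [hfil]
    simp

lemma card_compl_eq {k : ℕ} (S : Finset (Fin n)) (hS : S.card = k) :
    Sᶜ.card = n - k := by
  rw [Finset.card_compl, hS, Fintype.card_fin]

def buildFun {k : ℕ} (hk : k ≤ n) (S : Finset (Fin n)) (hS : S.card = k)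
    (π : Perm (Fin k)) : Fin n → Fin n :=
  fun i => if h : (i : ℕ) < k then S.orderEmbOfFin hS (π ⟨i, h⟩)
    else Sᶜ.orderEmbOfFin (card_compl_eq S hS) ⟨(i:ℕ) - k, by have := i.isLt; omega⟩

lemma buildFun_injective {k : ℕ} (hk : k ≤ n) (S : Finset (Fin n)) (hS : S.card = k)
    (π : Perm (Fin k)) : Function.Injective (buildFun hk S hS π) := by
  intro a b hab
  unfold buildFun at hab
  by_cases ha : (a:ℕ) < k <;> by_cases hb : (b:ℕ) < k
  · rw [dif_pos ha, dif_pos hb] at hab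
    have h1 := π.injective ((S.orderEmbOfFin hS).injective hab)
    exact Fin.ext (by simpa [Fin.ext_iff] using h1)
  · rw [dif_pos ha, dif_neg hb] at hab
    have h1 := Finset.orderEmbOfFin_mem S hS (π ⟨a, ha⟩)
    have h2 := Finset.orderEmbOfFin_mem Sᶜ (card_compl_eq S hS)
      ⟨(b:ℕ) - k, by have := b.isLt; omega⟩
    rw [hab] at h1
    rw [Finset.mem_compl] at h2
    exact absurd h1 h2
  · rw [dif_neg ha, dif_pos hb] at hab
    have h1 := Finset.orderEmbOfFin_mem S hS (π ⟨b, hb⟩)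
    have h2 := Finset.orderEmbOfFin_mem Sᶜ (card_compl_eq S hS)
      ⟨(a:ℕ) - k, by have := a.isLt; omega⟩
    rw [← hab] at h1
    rw [Finset.mem_compl] at h2
    exact absurd h1 h2
  · rw [dif_neg ha, dif_neg hb] at hab
    have h1 := (Sᶜ.orderEmbOfFin (card_compl_eq S hS)).injective hab
    have h2 : (a:ℕ) - k = (b:ℕ) - k := by simpa [Fin.ext_iff] using h1
    exact Fin.ext (by omega)

noncomputable def buildPerm {k : ℕ} (hk : k ≤ n) (S : Finset (Fin n)) (hS : S.card = k)
    (π : Perm (Fin k)) : Perm (Fin n) :=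
  Equiv.ofBijective _ (Finite.injective_iff_bijective.mp (buildFun_injective hk S hS π))

lemma buildPerm_apply_lt {k : ℕ} (hk : k ≤ n) (S : Finset (Fin n)) (hS : S.card = k)
    (π : Perm (Fin k)) (i : Fin n) (h : (i : ℕ) < k) :
    buildPerm hk S hS π i = S.orderEmbOfFin hS (π ⟨i, h⟩) := by
  show buildFun hk S hS π i = _
  unfold buildFun
  rw [dif_pos h]

lemma buildPerm_apply_ge {k : ℕ} (hk : k ≤ n) (S : Finset (Fin n)) (hS : S.card = k)
    (π : Perm (Fin k)) (i : Fin n) (h : ¬ (i : ℕ) < k) :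
    buildPerm hk S hS π i
      = Sᶜ.orderEmbOfFin (card_compl_eq S hS) ⟨(i:ℕ) - k, by have := i.isLt; omega⟩ := by
  show buildFun hk S hS π i = _
  unfold buildFun
  rw [dif_neg h]

lemma buildPerm_suffIncr {k : ℕ} (hk : k ≤ n) (S : Finset (Fin n)) (hS : S.card = k)
    (π : Perm (Fin k)) : SuffIncr k (buildPerm hk S hS π) := by
  intro i j hij hki
  have hik : ¬ (i:ℕ) < k := by omega
  have hjk : ¬ (j:ℕ) < k := by omega
  rw [buildPerm_apply_ge hk S hS π i hik, buildPerm_apply_ge hk S hS π j hjk]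
  exact (Sᶜ.orderEmbOfFin (card_compl_eq S hS)).strictMono (by simp [Fin.lt_def]; omega)

lemma validCut_build_iff {k : ℕ} (hk : k ≤ n) (S T : Finset (Fin n))
    (hS : S.card = k) (hT : T.card = k) (π1 π2 : Perm (Fin k)) :
    ValidCut k (buildPerm hk S hS π1, buildPerm hk T hT π2) ↔ ¬ CommonAscent π1 π2 := by
  constructor
  · rintro ⟨hpre, -, -⟩ ⟨a, b, hab, h1, h2⟩
    have ha : (a:ℕ) < n := lt_of_lt_of_le a.isLt hk
    have hb : (b:ℕ) < n := lt_of_lt_of_le b.isLt hk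
    refine hpre ⟨a, ha⟩ ⟨b, hb⟩ (by simpa using hab) (by simpa using b.isLt) ⟨?_, ?_⟩
    · rw [buildPerm_apply_lt hk S hS π1 ⟨a, ha⟩ a.isLt,
        buildPerm_apply_lt hk S hS π1 ⟨b, hb⟩ b.isLt]
      exact (S.orderEmbOfFin hS).strictMono h1
    · rw [buildPerm_apply_lt hk T hT π2 ⟨a, ha⟩ a.isLt,
        buildPerm_apply_lt hk T hT π2 ⟨b, hb⟩ b.isLt]
      exact (T.orderEmbOfFin hT).strictMono h2
  · intro hno
    refine ⟨?_, buildPerm_suffIncr hk S hS π1, buildPerm_suffIncr hk T hT π2⟩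
    rintro i j hij hjk ⟨h1, h2⟩
    have hik : (i:ℕ) < k := by omega
    rw [buildPerm_apply_lt hk S hS π1 i hik, buildPerm_apply_lt hk S hS π1 j hjk] at h1
    rw [buildPerm_apply_lt hk T hT π2 i hik, buildPerm_apply_lt hk T hT π2 j hjk] at h2
    exact hno ⟨⟨i, hik⟩, ⟨j, hjk⟩, by simpa using hij,
      (S.orderEmbOfFin hS).lt_iff_lt.mp h1, (T.orderEmbOfFin hT).lt_iff_lt.mp h2⟩

lemma mem_build_iff {k : ℕ} (hk : k ≤ n) (S : Finset (Fin n)) (hS : S.card = k)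
    (π : Perm (Fin k)) (x : Fin n) :
    x ∈ S ↔ ∃ i : Fin n, (i:ℕ) < k ∧ buildPerm hk S hS π i = x := by
  constructor
  · intro hx
    have hx' : x ∈ Set.range (S.orderEmbOfFin hS) := by
      rw [Finset.range_orderEmbOfFin]; exact hx
    obtain ⟨r, hr⟩ := hx'
    set a : Fin k := π.symm r with hadef
    refine ⟨⟨a, lt_of_lt_of_le a.isLt hk⟩, a.isLt, ?_⟩
    rw [buildPerm_apply_lt hk S hS π ⟨a, lt_of_lt_of_le a.isLt hk⟩ a.isLt]
    have : (⟨(a:ℕ), a.isLt⟩ : Fin k) = a := Fin.ext rfl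
    rw [this, hadef, Equiv.apply_symm_apply]
    exact hr
  · rintro ⟨i, hik, rfl⟩
    rw [buildPerm_apply_lt hk S hS π i hik]
    exact Finset.orderEmbOfFin_mem S hS _

lemma build_inj {k : ℕ} (hk : k ≤ n) (S S' : Finset (Fin n)) (hS : S.card = k)
    (hS' : S'.card = k) (π π' : Perm (Fin k))
    (h : buildPerm hk S hS π = buildPerm hk S' hS' π') : S = S' ∧ π = π' := by
  have hSS : S = S' := by
    ext x
    rw [mem_build_iff hk S hS π x, mem_build_iff hk S' hS' π' x, h]
  subst hSS
  refine ⟨rfl, Equiv.ext fun a => ?_⟩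
  have ha : (a:ℕ) < n := lt_of_lt_of_le a.isLt hk
  have h1 := buildPerm_apply_lt hk S hS π ⟨a, ha⟩ a.isLt
  have h2 := buildPerm_apply_lt hk S hS' π' ⟨a, ha⟩ a.isLt
  rw [h] at h1
  have h3 : S.orderEmbOfFin hS (π ⟨(a:ℕ), a.isLt⟩) = S.orderEmbOfFin hS' (π' ⟨(a:ℕ), a.isLt⟩) := by
    rw [← h1, ← h2]
  have h4 := Fin.ext (Finset.orderEmbOfFin_eq_orderEmbOfFin_iff.mp h3)
  have he : (⟨(a:ℕ), a.isLt⟩ : Fin k) = a := Fin.ext rfl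
  rw [he] at h4
  exact h4

lemma build_surj {k : ℕ} (hk : k ≤ n) (σ : Perm (Fin n)) (hσ : SuffIncr k σ) :
    ∃ (S : Finset (Fin n)) (hS : S.card = k) (π : Perm (Fin k)),
      buildPerm hk S hS π = σ := by
  classical
  set u : Fin k → Fin n := fun a => σ (Fin.castLE hk a) with hudef
  have huinj : Function.Injective u := by
    intro a b hab
    exact (Fin.castLE_injective hk) (σ.injective hab)
  set S : Finset (Fin n) := Finset.image u univ with hSdef
  have hS : S.card = k := by
    rw [hSdef, Finset.card_image_of_injective _ huinj, card_univ, Fintype.card_fin]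
  have hgmem : ∀ a : Fin k, u a ∈ S := fun a => Finset.mem_image_of_mem _ (mem_univ a)
  set g : Fin k → Fin k := fun a => (S.orderIsoOfFin hS).symm ⟨u a, hgmem a⟩ with hgdef
  have hcoe : ∀ a : Fin k, S.orderEmbOfFin hS (g a) = u a := by
    intro a
    rw [hgdef]
    have := (S.orderIsoOfFin hS).apply_symm_apply ⟨u a, hgmem a⟩
    calc S.orderEmbOfFin hS ((S.orderIsoOfFin hS).symm ⟨u a, hgmem a⟩)
        = ((S.orderIsoOfFin hS) ((S.orderIsoOfFin hS).symm ⟨u a, hgmem a⟩) : Fin n) :=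
          (Finset.coe_orderIsoOfFin_apply S hS _).symm
      _ = u a := by rw [this]
  have hginj : Function.Injective g := by
    intro a b hab
    apply huinj
    rw [← hcoe a, ← hcoe b, hab]
  set π : Perm (Fin k) := Equiv.ofBijective g (Finite.injective_iff_bijective.mp hginj)
    with hπdef
  have hπ : ∀ a, π a = g a := fun a => rfl
  refine ⟨S, hS, π, Equiv.ext fun i => ?_⟩
  by_cases hik : (i:ℕ) < k
  · rw [buildPerm_apply_lt hk S hS π i hik, hπ, hcoe]
    have : Fin.castLE hk ⟨(i:ℕ), hik⟩ = i := Fin.ext rfl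
    rw [hudef]
    simp only [this]
  · rw [buildPerm_apply_ge hk S hS π i hik]
    set f : Fin (n-k) → Fin n := fun m => σ ⟨k + (m:ℕ), by have := m.isLt; omega⟩ with hfdef
    have hmono : StrictMono f := by
      intro a b hab
      have hab' : (a:ℕ) < (b:ℕ) := hab
      exact hσ.lt _ _ (by simp) (by simp; omega)
    have hmem : ∀ m, f m ∈ Sᶜ := by
      intro m
      rw [Finset.mem_compl, hSdef]
      intro hm
      obtain ⟨a, -, ha⟩ := Finset.mem_image.mp hm
      have := σ.injective ha
      have : (Fin.castLE hk a : ℕ) = k + (m:ℕ) := congrArg Fin.val this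
      simp at this
      omega
    have huniq := Finset.orderEmbOfFin_unique (card_compl_eq S hS) hmem hmono
    have := congrFun huniq ⟨(i:ℕ) - k, by have := i.isLt; omega⟩
    rw [← this, hfdef]
    have he : (⟨k + ((i:ℕ) - k), by have := i.isLt; omega⟩ : Fin n) = i := Fin.ext (by simp; omega)
    simp only [he]

lemma cardA (k : ℕ) (hk : k ≤ n) :
    ((univ : Finset (Perm (Fin n) × Perm (Fin n))).filter (fun p => ValidCut k p)).card
      = n.choose k ^ 2 * (noCA k).card := by
  classical
  set X := ((powersetCard k (univ : Finset (Fin n))) ×ˢ (powersetCard k (univ : Finset (Fin n))))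
      ×ˢ noCA k with hX
  have hc1 : ∀ x ∈ X, x.1.1.card = k := by
    intro x hx
    rw [hX, Finset.mem_product] at hx
    exact Finset.mem_powersetCard_univ.mp (Finset.mem_product.mp hx.1).1
  have hc2 : ∀ x ∈ X, x.1.2.card = k := by
    intro x hx
    rw [hX, Finset.mem_product] at hx
    exact Finset.mem_powersetCard_univ.mp (Finset.mem_product.mp hx.1).2
  have key : X.card = ((univ : Finset (Perm (Fin n) × Perm (Fin n))).filter
      (fun p => ValidCut k p)).card := by
    apply Finset.card_bij (fun x hx =>
      (buildPerm hk x.1.1 (hc1 x hx) x.2.1, buildPerm hk x.1.2 (hc2 x hx) x.2.2))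
    · intro x hx
      rw [Finset.mem_filter]
      refine ⟨mem_univ _, ?_⟩
      have hno : ¬ CommonAscent x.2.1 x.2.2 := by
        have := (Finset.mem_product.mp hx).2
        rw [noCA, Finset.mem_filter] at this
        exact this.2
      exact (validCut_build_iff hk x.1.1 x.1.2 (hc1 x hx) (hc2 x hx) x.2.1 x.2.2).mpr hno
    · intro a ha b hb hab
      have h1 := congrArg Prod.fst hab
      have h2 := congrArg Prod.snd hab
      simp only at h1 h2
      obtain ⟨e1, e2⟩ := build_inj hk a.1.1 b.1.1 (hc1 a ha) (hc1 b hb) a.2.1 b.2.1 h1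
      obtain ⟨e3, e4⟩ := build_inj hk a.1.2 b.1.2 (hc2 a ha) (hc2 b hb) a.2.2 b.2.2 h2
      exact Prod.ext (Prod.ext e1 e3) (Prod.ext e2 e4)
    · intro p hp
      rw [Finset.mem_filter] at hp
      obtain ⟨-, hv⟩ := hp
      obtain ⟨S, hS, π1, h1⟩ := build_surj hk p.1 hv.2.1
      obtain ⟨T, hT, π2, h2⟩ := build_surj hk p.2 hv.2.2
      have hvb : ValidCut k (buildPerm hk S hS π1, buildPerm hk T hT π2) := by
        rw [h1, h2]; exact hv
      have hno := (validCut_build_iff hk S T hS hT π1 π2).mp hvb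
      have hmem : ((S, T), (π1, π2)) ∈ X := by
        rw [hX, Finset.mem_product, Finset.mem_product]
        refine ⟨⟨Finset.mem_powersetCard_univ.mpr hS, Finset.mem_powersetCard_univ.mpr hT⟩, ?_⟩
        rw [noCA, Finset.mem_filter]
        exact ⟨mem_univ _, hno⟩
      exact ⟨((S, T), (π1, π2)), hmem, Prod.ext h1 h2⟩
  rw [← key, hX, Finset.card_product, Finset.card_product, Finset.card_powersetCard,
    card_univ, Fintype.card_fin]
  ring

lemma key_identity (hn : 1 ≤ n) :
    ∑ k ∈ Finset.range (n+1), (-1:ℚ)^k * (n.choose k : ℚ)^2 * ((noCA k).card : ℚ) = 0 := by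
  have h1 : ∀ k ∈ Finset.range (n+1),
      (-1:ℚ)^k * (n.choose k : ℚ)^2 * ((noCA k).card : ℚ)
        = ∑ p ∈ (univ : Finset (Perm (Fin n) × Perm (Fin n))),
            (if ValidCut k p then ((-1:ℚ))^k else 0) := by
    intro k hk
    rw [← Finset.sum_filter, Finset.sum_const, cardA k (by have := Finset.mem_range.mp hk; omega : k ≤ n)]
    push_cast
    ring
  rw [Finset.sum_congr rfl h1, Finset.sum_comm]
  rw [Finset.sum_eq_zero]
  intro p _
  exact sum_valid hn p

/-- if `ω` satisfies `ω 0 = 1` and the recursion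
`∑_{k=0}^n (-1)^k C(n,k)^2 ω_k = 0` for `n ≥ 1`, then `ω n` is the number of pairs
of permutations of `{1,...,n}` with no common ascent. -/
theorem omega_eq_card_no_common_ascent (ω : ℕ → ℚ) (h0 : ω 0 = 1)
    (hrec : ∀ n : ℕ, 1 ≤ n →
      ∑ k ∈ Finset.range (n + 1), (-1 : ℚ) ^ k * (n.choose k : ℚ) ^ 2 * ω k = 0) :
    ∀ n : ℕ, ω n =
      Nat.card {p : Equiv.Perm (Fin n) × Equiv.Perm (Fin n) // ¬ CommonAscent p.1 p.2} := by
  have hcard : ∀ m : ℕ,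
      Nat.card {p : Equiv.Perm (Fin m) × Equiv.Perm (Fin m) // ¬ CommonAscent p.1 p.2}
        = (noCA m).card := by
    intro m
    rw [Nat.card_eq_fintype_card, Fintype.card_subtype]
    rfl
  intro n
  induction n using Nat.strong_induction_on with
  | _ n ih =>
    rcases Nat.eq_zero_or_pos n with rfl | hn
    · rw [h0, hcard 0]
      norm_num
      decide
    · have hr := hrec n hn
      have hkey := key_identity hn
      have hsub : ∑ k ∈ Finset.range (n+1),
          (-1:ℚ)^k * (n.choose k : ℚ)^2 * (ω k - ((noCA k).card : ℚ)) = 0 := by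
        have : ∀ k, (-1:ℚ)^k * (n.choose k : ℚ)^2 * (ω k - ((noCA k).card : ℚ))
            = (-1:ℚ)^k * (n.choose k : ℚ)^2 * ω k
              - (-1:ℚ)^k * (n.choose k : ℚ)^2 * ((noCA k).card : ℚ) := fun k => by ring
        simp only [this, Finset.sum_sub_distrib, hr, hkey, sub_zero]
      rw [Finset.sum_range_succ] at hsub
      have hzero : ∑ k ∈ Finset.range n,
          (-1:ℚ)^k * (n.choose k : ℚ)^2 * (ω k - ((noCA k).card : ℚ)) = 0 := by
        apply Finset.sum_eq_zero
        intro k hk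
        have := ih k (Finset.mem_range.mp hk)
        rw [hcard k] at this
        rw [this]
        ring
      rw [hzero, zero_add, Nat.choose_self] at hsub
      have h2 : ω n - ((noCA n).card : ℚ) = 0 := by
        have hne : ((-1:ℚ)^n : ℚ) ≠ 0 := pow_ne_zero n (by norm_num)
        have := mul_eq_zero.mp hsub
        rcases this with h | h
        · exact absurd (mul_eq_zero.mp h) (by push_neg; exact ⟨hne, by norm_num⟩)
        · exact h
      rw [hcard n]
      linarith
end

section
/- Let F(z) = ∑_{n≥0} (-1)^n z^n / ([n]_q!)^2 and G(z) = ∑_{n≥0} W_n(q) z^n / ([n]_q!)^2, as formal power series in z over the field of rational functions in q, where W_n(q) = ∑ q^{inv(σ)+inv(τ)} over pairs of permutations of {1,...,n} with no common ascent. Then F(z)·G(z) = 1. -/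
open Finset

/-- The `q`-analogue `[i]_q = 1 + q + ... + q^{i-1}` as a polynomial. -/
noncomputable def qInt (i : ℕ) : Polynomial ℚ := ∑ j ∈ Finset.range i, Polynomial.X ^ j

/-- The `q`-factorial `[n]_q! = ∏_{i=1}^n [i]_q`. -/
noncomputable def qFact (n : ℕ) : Polynomial ℚ := ∏ i ∈ Finset.range n, qInt (i + 1)

/-- The Gaussian binomial coefficient `[n choose i]_q = [n]_q!/([i]_q![n-i]_q!)`,
as a rational function in `q`. -/
noncomputable def qBinom (n i : ℕ) : RatFunc ℚ :=
  algebraMap (Polynomial ℚ) (RatFunc ℚ) (qFact n) /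
    (algebraMap (Polynomial ℚ) (RatFunc ℚ) (qFact i) *
      algebraMap (Polynomial ℚ) (RatFunc ℚ) (qFact (n - i)))

/-!
Comparing coefficients of `z^n`, the claim is `∑ m ≤ n, (-1)^m [n choose m]_q² W_m = 0` for
`n ≥ 1`. Let `P(a, b)` be the inversion generating function of the pairs `(σ, τ) ∈ S_n²` with no
common ascent `(i, i+1)` for `i + 1 < a` and in which both permutations ascend at every `i ≥ b`.
A permutation of `{0, …, n-1}` is a shuffle of its patterns on the first `m` and on the last
`n - m` positions, its inversions being those of the two patterns plus those between the blocks,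
whose generating function is `[n choose m]_q`. This gives `[m]_q! [n-m]_q! [n choose m]_q = [n]_q!`
and, since an ascending last block has the identity pattern, `P(m, m) = W_m [n choose m]_q²`.
Splitting `P(k+1, k+1)` according to whether `(k, k+1)` is a common ascent gives
`P(k+1, k+1) = P(k+2, k+1) + P(k+1, k)`, so the alternating sum of the `P(m, m)` telescopes, and
it vanishes because `P(n, n-1) = P(n, n) = W_n`.
-/

open Equiv Polynomial

section Shuffle

variable {m k : ℕ}

lemma card_compl_of_card_eq {S : Finset (Fin (m + k))} (hS : #S = m) : #Sᶜ = k := by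
  simp [card_compl, hS]

/-- The permutation sending the first `m` positions onto `S` in the relative order `π` and the
last `k` positions onto `Sᶜ` in the relative order `ρ`. -/
def shuffle (S : Finset (Fin (m + k))) (hS : #S = m) (π : Perm (Fin m)) (ρ : Perm (Fin k)) :
    Perm (Fin (m + k)) :=
  finSumFinEquiv.symm.trans <| (π.sumCongr ρ).trans <|
    ((S.orderIsoOfFin hS).toEquiv.sumCongr
      ((Sᶜ.orderIsoOfFin (card_compl_of_card_eq hS)).toEquiv.trans
        (subtypeEquivRight fun _ => mem_compl))).trans (sumCompl (· ∈ S))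

variable (S : Finset (Fin (m + k))) (hS : #S = m) (π : Perm (Fin m)) (ρ : Perm (Fin k))

@[simp]
lemma shuffle_castAdd (i : Fin m) :
    shuffle S hS π ρ (Fin.castAdd k i) = S.orderEmbOfFin hS (π i) := by
  simp [shuffle]

@[simp]
lemma shuffle_natAdd (j : Fin k) :
    shuffle S hS π ρ (Fin.natAdd m j) = Sᶜ.orderEmbOfFin (card_compl_of_card_eq hS) (ρ j) := by
  simp [shuffle]

lemma image_shuffle_castAdd : univ.image (shuffle S hS π ρ ∘ Fin.castAdd k) = S := by
  refine eq_of_subset_of_card_le (by simp [image_subset_iff, orderEmbOfFin_mem]) ?_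
  rw [card_image_of_injective _ ((shuffle S hS π ρ).injective.comp (Fin.castAdd_injective m k)),
    card_univ, Fintype.card_fin, hS]

lemma shuffle_injective :
    Function.Injective fun x : (Perm (Fin m) × Perm (Fin k)) ×
      {S : Finset (Fin (m + k)) // #S = m} => shuffle x.2.1 x.2.2 x.1.1 x.1.2 := by
  rintro ⟨⟨π, ρ⟩, S, hS⟩ ⟨⟨π', ρ'⟩, S', hS'⟩ h
  dsimp only at h
  obtain rfl : S = S' := by
    rw [← image_shuffle_castAdd S hS π ρ, ← image_shuffle_castAdd S' hS' π' ρ', h]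
  have hπ : π = π' := Equiv.ext fun i => by simpa using congr($h (Fin.castAdd k i))
  have hρ : ρ = ρ' := Equiv.ext fun j => by simpa using congr($h (Fin.natAdd m j))
  rw [hπ, hρ]

lemma shuffle_bijective :
    Function.Bijective fun x : (Perm (Fin m) × Perm (Fin k)) ×
      {S : Finset (Fin (m + k)) // #S = m} => shuffle x.2.1 x.2.2 x.1.1 x.1.2 := by
  rw [Fintype.bijective_iff_injective_and_card]
  refine ⟨shuffle_injective, ?_⟩
  simp only [Fintype.card_prod, Fintype.card_perm, Fintype.card_fin, Fintype.card_finset_len]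
  rw [← Nat.add_choose_mul_factorial_mul_factorial, Nat.choose_symm_add]
  ring

lemma sum_perm_eq_sum_shuffle {M : Type*} [AddCommMonoid M] (f : Perm (Fin (m + k)) → M) :
    ∑ σ, f σ =
      ∑ π, ∑ ρ, ∑ S : {S : Finset (Fin (m + k)) // #S = m}, f (shuffle S.1 S.2 π ρ) := by
  rw [← Fintype.sum_bijective _ shuffle_bijective _ f fun _ => rfl]
  simp only [Fintype.sum_prod_type]

end Shuffle

section Inversions

variable {n m k : ℕ}

lemma inversions_eq_sum (σ : Perm (Fin n)) :
    inversions σ = ∑ i, ∑ j, if i < j ∧ σ j < σ i then 1 else 0 := by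
  rw [inversions, card_filter, Fintype.sum_prod_type]

lemma inversions_one : inversions (1 : Perm (Fin n)) = 0 := by
  simp only [inversions, card_eq_zero, filter_eq_empty_iff]
  exact fun _ _ h => lt_asymm h.1 h.2

lemma inversions_of_subsingleton [Subsingleton (Fin n)] (σ : Perm (Fin n)) :
    inversions σ = 0 := by
  simp [inversions]

def crossInversions (S : Finset (Fin n)) : ℕ := #{p ∈ S ×ˢ Sᶜ | p.2 < p.1}

lemma crossInversions_singleton (a : Fin n) : crossInversions {a} = a := by
  rw [crossInversions, singleton_product, filter_map, card_map, ← Fin.card_Iio a]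
  congr 1
  ext b
  simpa using ne_of_lt

lemma Finset.sum_eq_sum_orderEmbOfFin {α M : Type*} [LinearOrder α] [AddCommMonoid M]
    (s : Finset α) (h : #s = k) (f : α → M) : ∑ a ∈ s, f a = ∑ i, f (s.orderEmbOfFin h i) := by
  conv_lhs => rw [← map_orderEmbOfFin_univ s h]
  rw [sum_map]
  rfl

lemma crossInversions_eq_sum (S : Finset (Fin n)) (hS : #S = m) (hS' : #Sᶜ = k)
    (π : Perm (Fin m)) (ρ : Perm (Fin k)) :
    crossInversions S =
      ∑ i, ∑ j, if Sᶜ.orderEmbOfFin hS' (ρ j) < S.orderEmbOfFin hS (π i) then 1 else 0 := by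
  simp only [crossInversions, card_filter, sum_product, sum_eq_sum_orderEmbOfFin S hS,
    sum_eq_sum_orderEmbOfFin Sᶜ hS']
  rw [← Equiv.sum_comp π]
  exact sum_congr rfl fun i _ => (Equiv.sum_comp ρ _).symm

lemma inversions_shuffle (S : Finset (Fin (m + k))) (hS : #S = m) (π : Perm (Fin m))
    (ρ : Perm (Fin k)) :
    inversions (shuffle S hS π ρ) = inversions π + inversions ρ + crossInversions S := by
  have castAdd_lt_natAdd (i : Fin m) (j : Fin k) : Fin.castAdd k i < Fin.natAdd m j := by
    simp only [Fin.lt_def, Fin.val_castAdd, Fin.val_natAdd]; omega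
  simp only [inversions_eq_sum, Fin.sum_univ_add, sum_add_distrib, shuffle_castAdd,
    shuffle_natAdd, castAdd_lt_natAdd, (castAdd_lt_natAdd _ _).not_gt,
    (Fin.strictMono_castAdd k).lt_iff_lt, Fin.natAdd_lt_natAdd_iff, OrderEmbedding.lt_iff_lt,
    true_and, false_and, if_false, sum_const_zero, add_zero,
    crossInversions_eq_sum S hS (card_compl_of_card_eq hS) π ρ]
  ring

end Inversions

section QFactorial

/-- The Gaussian binomial coefficient `[n choose m]_q`, as the generating function of the
inversions between an `m`-subset of positions and its complement. -/
noncomputable def gaussBinom (n m : ℕ) : ℚ[X] :=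
  ∑ S ∈ powersetCard m (univ : Finset (Fin n)), X ^ crossInversions S

lemma sum_X_pow_inversions_add (m k : ℕ) :
    ∑ σ : Perm (Fin (m + k)), (X : ℚ[X]) ^ inversions σ =
      (∑ π : Perm (Fin m), X ^ inversions π) * (∑ ρ : Perm (Fin k), X ^ inversions ρ) *
        gaussBinom (m + k) m := by
  rw [sum_perm_eq_sum_shuffle, gaussBinom,
    sum_subtype (F := inferInstance) _ fun _ => mem_powersetCard_univ]
  simp only [inversions_shuffle, pow_add]
  rw [sum_mul_sum, sum_mul]
  simp only [sum_mul_sum]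

lemma gaussBinom_one (n : ℕ) : gaussBinom (n + 1) 1 = qInt (n + 1) := by
  simp [gaussBinom, powersetCard_one, crossInversions_singleton, qInt,
    Fin.sum_univ_eq_sum_range (fun j => (X : ℚ[X]) ^ j)]

lemma qFact_eq_sum_X_pow_inversions (n : ℕ) :
    qFact n = ∑ σ : Perm (Fin n), (X : ℚ[X]) ^ inversions σ := by
  induction n with
  | zero => simp [qFact, inversions_of_subsingleton]
  | succ n ih =>
    have h := sum_X_pow_inversions_add 1 n
    rw [add_comm 1 n] at h
    rw [h, ← ih, gaussBinom_one, qFact, prod_range_succ, ← qFact]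
    simp [inversions_of_subsingleton]

lemma qFact_mul_qFact_mul_gaussBinom (m k : ℕ) :
    qFact m * qFact k * gaussBinom (m + k) m = qFact (m + k) := by
  simp only [qFact_eq_sum_X_pow_inversions, sum_X_pow_inversions_add]

lemma qFact_ne_zero (n : ℕ) : qFact n ≠ 0 :=
  (monic_prod_of_monic _ _ fun i _ => monic_geom_sum_X i.succ_ne_zero).ne_zero

lemma algebraMap_gaussBinom {n m : ℕ} (h : m ≤ n) :
    algebraMap ℚ[X] (RatFunc ℚ) (gaussBinom n m) = qBinom n m := by
  obtain ⟨k, rfl⟩ := Nat.exists_eq_add_of_le h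
  rw [qBinom, Nat.add_sub_cancel_left, eq_div_iff (by simp [qFact_ne_zero]),
    ← qFact_mul_qFact_mul_gaussBinom m k]
  simp only [map_mul]
  ring

end QFactorial

section Ascents

variable {n : ℕ}

instance (σ τ : Perm (Fin n)) : Decidable (CommonAscent σ τ) :=
  (inferInstance : DecidablePred fun p : Perm (Fin n) × Perm (Fin n) => CommonAscent p.1 p.2)
    (σ, τ)

def NoCommonAscentBelow (a : ℕ) (σ τ : Perm (Fin n)) : Prop :=
  ∀ i j : Fin n, (i : ℕ) + 1 = j → (j : ℕ) < a → ¬ (σ i < σ j ∧ τ i < τ j)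

def AscendsFrom (b : ℕ) (σ : Perm (Fin n)) : Prop :=
  ∀ i j : Fin n, (i : ℕ) + 1 = j → b ≤ i → σ i < σ j

instance (a : ℕ) (σ τ : Perm (Fin n)) : Decidable (NoCommonAscentBelow a σ τ) := by
  unfold NoCommonAscentBelow; infer_instance

instance (b : ℕ) : DecidablePred (AscendsFrom (n := n) b) := fun _ => by
  unfold AscendsFrom; infer_instance

lemma strictMono_of_ascendsFrom_zero {σ : Perm (Fin n)} (h : AscendsFrom 0 σ) :
    StrictMono σ := by
  cases n with
  | zero => exact fun i => i.elim0
  | succ n => exact Fin.strictMono_iff_lt_succ.2 fun i => h _ _ (by simp) (Nat.zero_le _)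

lemma ascendsFrom_zero_iff {σ : Perm (Fin n)} : AscendsFrom 0 σ ↔ σ = 1 := by
  refine ⟨fun h => Equiv.ext (congrFun (strictMono_of_ascendsFrom_zero h).eq_id), ?_⟩
  rintro rfl i j hij -
  simp [Fin.lt_def, ← hij]

lemma noCommonAscentBelow_succ_iff {k : ℕ} (hk : k + 1 < n) {σ τ : Perm (Fin n)} :
    NoCommonAscentBelow (k + 2) σ τ ↔ NoCommonAscentBelow (k + 1) σ τ ∧
      ¬ (σ ⟨k, by omega⟩ < σ ⟨k + 1, hk⟩ ∧ τ ⟨k, by omega⟩ < τ ⟨k + 1, hk⟩) := by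
  refine ⟨fun h => ⟨fun i j hij hj => h i j hij (by omega), h _ _ rfl (by simp)⟩,
    fun ⟨h, hnot⟩ i j hij hj => ?_⟩
  rcases Nat.lt_succ_iff_lt_or_eq.1 hj with hj | hj
  · exact h i j hij hj
  · obtain rfl : i = ⟨k, Nat.lt_of_succ_lt hk⟩ := Fin.ext (show (i : ℕ) = k by omega)
    obtain rfl : j = ⟨k + 1, hk⟩ := Fin.ext hj
    exact hnot

lemma ascendsFrom_iff {k : ℕ} (hk : k + 1 < n) {σ : Perm (Fin n)} :
    AscendsFrom k σ ↔ AscendsFrom (k + 1) σ ∧ σ ⟨k, by omega⟩ < σ ⟨k + 1, hk⟩ := by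
  refine ⟨fun h => ⟨fun i j hij hi => h i j hij (by omega), h _ _ rfl le_rfl⟩,
    fun ⟨h, hasc⟩ i j hij hi => ?_⟩
  rcases hi.lt_or_eq with hi | hi
  · exact h i j hij hi
  · obtain rfl : i = ⟨k, Nat.lt_of_succ_lt hk⟩ := Fin.ext hi.symm
    obtain rfl : j = ⟨k + 1, hk⟩ := Fin.ext (by simp [← hij])
    exact hasc

variable {m k : ℕ} {S T : Finset (Fin (m + k))} (hS : #S = m) (hT : #T = m)

lemma ascendsFrom_shuffle_iff (π : Perm (Fin m)) (ρ : Perm (Fin k)) :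
    AscendsFrom m (shuffle S hS π ρ) ↔ ρ = 1 := by
  rw [← ascendsFrom_zero_iff]
  refine ⟨fun h i j hij _ => ?_, fun h i j hij hi => ?_⟩
  · simpa using h (Fin.natAdd m i) (Fin.natAdd m j) (by simp [← hij, add_assoc]) (by simp)
  · induction i using Fin.addCases with
    | left i => exact absurd hi (by simp)
    | right i =>
      induction j using Fin.addCases with
      | left j => simp at hij; omega
      | right j => simpa using h i j (by simpa [add_assoc] using hij) (Nat.zero_le _)

lemma noCommonAscentBelow_shuffle_iff (π π' : Perm (Fin m)) (ρ ρ' : Perm (Fin k)) :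
    NoCommonAscentBelow m (shuffle S hS π ρ) (shuffle T hT π' ρ') ↔ ¬ CommonAscent π π' := by
  refine ⟨fun h ⟨i, j, hij, hπ, hπ'⟩ => ?_, fun h i j hij hj => ?_⟩
  · exact h (Fin.castAdd k i) (Fin.castAdd k j) hij j.2 (by simpa using ⟨hπ, hπ'⟩)
  · induction j using Fin.addCases with
    | right j => simp at hj
    | left j =>
      induction i using Fin.addCases with
      | right i => simp at hij; omega
      | left i => simpa using fun hπ hπ' => h ⟨i, j, hij, hπ, hπ'⟩

lemma sum_filter_ascendsFrom {M : Type*} [AddCommMonoid M] (f : Perm (Fin (m + k)) → M) :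
    ∑ σ ∈ univ.filter (AscendsFrom m), f σ =
      ∑ π, ∑ S : {S : Finset (Fin (m + k)) // #S = m}, f (shuffle S.1 S.2 π 1) := by
  rw [sum_filter, sum_perm_eq_sum_shuffle]
  simp only [ascendsFrom_shuffle_iff, sum_ite_irrel, sum_const_zero, sum_ite_eq', mem_univ,
    if_true]

end Ascents

section PartialW

/-- `P(a, b)` from the sketch at the top, for permutations of `Fin n`. -/
noncomputable def partialW (n a b : ℕ) : ℚ[X] :=
  ∑ p ∈ univ.filter (fun p : Perm (Fin n) × Perm (Fin n) =>
      AscendsFrom b p.1 ∧ AscendsFrom b p.2 ∧ NoCommonAscentBelow a p.1 p.2),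
    X ^ (inversions p.1 + inversions p.2)

variable {n : ℕ}

lemma partialW_eq_sum_sum (n a b : ℕ) :
    partialW n a b =
      ∑ σ ∈ (univ : Finset (Perm (Fin n))).filter (AscendsFrom b),
        ∑ τ ∈ (univ : Finset (Perm (Fin n))).filter (AscendsFrom b),
          if NoCommonAscentBelow a σ τ then X ^ (inversions σ + inversions τ) else 0 := by
  rw [partialW, sum_filter, ← univ_product_univ, sum_product]
  simp only [sum_filter, ite_and, sum_ite_irrel, sum_const_zero]

lemma partialW_succ {k : ℕ} (hk : k + 2 ≤ n) :
    partialW n (k + 1) (k + 1) = partialW n (k + 2) (k + 1) + partialW n (k + 1) k := by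
  let i : Fin n := ⟨k, by omega⟩
  let j : Fin n := ⟨k + 1, by omega⟩
  rw [partialW, ← sum_filter_add_sum_filter_not _ fun p => p.1 i < p.1 j ∧ p.2 i < p.2 j,
    add_comm, partialW, partialW, filter_filter, filter_filter]
  congr 2 <;> ext p <;>
    simp only [noCommonAscentBelow_succ_iff (show k + 1 < n by omega),
      ascendsFrom_iff (show k + 1 < n by omega), mem_filter, mem_univ, true_and] <;> tauto

lemma partialW_zero_left (b : ℕ) : partialW n 0 b = partialW n 1 b := by
  have (a : ℕ) (ha : a ≤ 1) (σ τ : Perm (Fin n)) : NoCommonAscentBelow a σ τ :=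
    fun i j hij hj => by omega
  simp only [partialW, this 0 (by omega), this 1 le_rfl]

lemma partialW_eq_W {a b : ℕ} (ha : n ≤ a) (hb : n ≤ b + 1) : partialW n a b = W n := by
  have hasc (σ : Perm (Fin n)) : AscendsFrom b σ := fun i j hij hi => by omega
  have hnca (σ τ : Perm (Fin n)) : NoCommonAscentBelow a σ τ ↔ ¬ CommonAscent σ τ := by
    simp only [NoCommonAscentBelow, CommonAscent, not_exists, not_and]
    exact ⟨fun h i j hij => h i j hij (j.2.trans_le ha), fun h i j hij _ => h i j hij⟩
  simp only [partialW, W, hasc, hnca, true_and]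

lemma partialW_diag (m k : ℕ) : partialW (m + k) m m = W m * gaussBinom (m + k) m ^ 2 := by
  rw [partialW_eq_sum_sum]
  simp only [sum_filter_ascendsFrom, noCommonAscentBelow_shuffle_iff, inversions_shuffle,
    inversions_one, add_zero]
  rw [W, sum_filter, Fintype.sum_prod_type, gaussBinom,
    sum_subtype (F := inferInstance) _ fun _ => mem_powersetCard_univ]
  have factor (c : Prop) [Decidable c] (a b s t : ℕ) :
      (if c then (X : ℚ[X]) ^ (a + s + (b + t)) else 0) =
        (if c then X ^ (a + b) else 0) * (X ^ s * X ^ t) := by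
    split_ifs <;> ring
  simp only [factor]
  rw [sum_congr rfl fun π _ => sum_comm]
  simp only [← mul_sum, sq, sum_mul]

end PartialW

lemma sum_range_neg_one_pow_mul_of_telescoping {R : Type*} [CommRing R] {f g : ℕ → R} {K : ℕ}
    (h0 : f 0 = g 0) (hsucc : ∀ k < K, f (k + 1) = g (k + 1) + g k) :
    ∑ m ∈ range (K + 1), (-1) ^ m * f m = (-1) ^ K * g K := by
  induction K with
  | zero => simp [h0]
  | succ K ih =>
    rw [sum_range_succ, ih fun k hk => hsucc k (by omega), hsucc K (by omega)]
    ring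

lemma sum_range_neg_one_pow_mul_partialW {n : ℕ} (hn : 1 ≤ n) :
    ∑ m ∈ range (n + 1), (-1) ^ m * partialW n m m = 0 := by
  obtain ⟨K, rfl⟩ := Nat.exists_eq_add_of_le' hn
  rw [sum_range_succ, sum_range_neg_one_pow_mul_of_telescoping
      (f := fun m => partialW (K + 1) m m) (g := fun k => partialW (K + 1) (k + 1) k)
      (partialW_zero_left 0) fun k hk => partialW_succ (by omega),
    partialW_eq_W le_rfl le_rfl, partialW_eq_W le_rfl (by omega), pow_succ]
  ring

lemma sum_range_neg_one_pow_mul_W_mul_gaussBinom_sq {n : ℕ} (hn : 1 ≤ n) :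
    ∑ m ∈ range (n + 1), (-1) ^ m * (W m * gaussBinom n m ^ 2) = 0 := by
  rw [← sum_range_neg_one_pow_mul_partialW hn]
  refine sum_congr rfl fun m hm => ?_
  obtain ⟨k, rfl⟩ := Nat.exists_eq_add_of_le (mem_range_succ_iff.1 hm)
  rw [partialW_diag]

lemma sum_range_neg_one_pow_mul_qBinom_sq_mul_W {n : ℕ} (hn : 1 ≤ n) :
    ∑ i ∈ range (n + 1), (-1) ^ i * qBinom n i ^ 2 * algebraMap ℚ[X] (RatFunc ℚ) (W i) =
      0 := by
  have h := congr(algebraMap ℚ[X] (RatFunc ℚ)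
    $(sum_range_neg_one_pow_mul_W_mul_gaussBinom_sq hn))
  rw [map_zero, map_sum] at h
  rw [← h]
  refine sum_congr rfl fun i hi => ?_
  rw [← algebraMap_gaussBinom (mem_range_succ_iff.1 hi)]
  simp only [map_mul, map_pow, map_neg, map_one]
  ring

lemma W_zero : W 0 = 1 := by
  simp [W, CommonAscent, inversions_of_subsingleton]

lemma neg_one_pow_div_qFact_sq_mul_div_qFact_sq (i j : ℕ) (x : RatFunc ℚ) :
    (-1) ^ i / algebraMap ℚ[X] (RatFunc ℚ) (qFact i) ^ 2 *
        (x / algebraMap ℚ[X] (RatFunc ℚ) (qFact j) ^ 2) =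
      (-1) ^ (i + j) / algebraMap ℚ[X] (RatFunc ℚ) (qFact (i + j)) ^ 2 *
        ((-1) ^ j * qBinom (i + j) j ^ 2 * x) := by
  have hsign : ((-1 : RatFunc ℚ) ^ j) ^ 2 = 1 := by
    rw [← pow_mul, pow_mul', neg_one_sq, one_pow]
  have hA (n : ℕ) : algebraMap ℚ[X] (RatFunc ℚ) (qFact n) ≠ 0 := by simp [qFact_ne_zero]
  rw [qBinom, Nat.add_sub_cancel]
  field_simp [hA]
  linear_combination -((-1) ^ i * x) * hsign

/-- with `F(z) = ∑ (-1)^n z^n/([n]_q!)^2` and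
`G(z) = ∑ W_n(q) z^n/([n]_q!)^2` as formal power series over `ℚ(q)`,
we have `F(z)·G(z) = 1`. -/
theorem qBessel_reciprocal :
    (PowerSeries.mk fun n =>
        ((-1 : RatFunc ℚ)) ^ n / (algebraMap (Polynomial ℚ) (RatFunc ℚ) (qFact n)) ^ 2) *
      (PowerSeries.mk fun n =>
        algebraMap (Polynomial ℚ) (RatFunc ℚ) (W n) /
          (algebraMap (Polynomial ℚ) (RatFunc ℚ) (qFact n)) ^ 2) = 1 := by
  ext n
  rw [PowerSeries.coeff_mul, PowerSeries.coeff_one]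
  simp only [PowerSeries.coeff_mk]
  rcases Nat.eq_zero_or_pos n with rfl | hn
  · simp [W_zero, qFact]
  rw [if_neg hn.ne']
  calc _ = ∑ p ∈ antidiagonal n, (-1) ^ n / algebraMap ℚ[X] (RatFunc ℚ) (qFact n) ^ 2 *
        ((-1) ^ p.2 * qBinom n p.2 ^ 2 * algebraMap ℚ[X] (RatFunc ℚ) (W p.2)) :=
        sum_congr rfl fun p hp => by
          rw [← mem_antidiagonal.1 hp, neg_one_pow_div_qFact_sq_mul_div_qFact_sq]
    _ = 0 := by
      rw [← mul_sum, ← Nat.sum_antidiagonal_swap]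
      simp only [Prod.snd_swap]
      rw [Nat.sum_antidiagonal_eq_sum_range_succ_mk, sum_range_neg_one_pow_mul_qBinom_sq_mul_W hn,
        mul_zero]
end

section
/- For permutations σ, τ of {1,...,n} chosen so that (σ,τ) ranges over pairs with no common ascent, the polynomial W_n(q) = ∑ q^{inv(σ)+inv(τ)} satisfies the recursion W_n(q) = -∑_{i=0}^{n-1} (-1)^{n-i} [n choose i]_q^2 W_i(q), equivalently (-1)^n W_n(q) = -∑_{i=0}^{n-1} [n choose i]_q^2 (-1)^i W_i(q). -/
open Finset

namespace Wrec
open Equiv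


variable {n i : ℕ}

/-- the block equivalence -/
def blk (h : i ≤ n) : Fin i ⊕ Fin (n - i) ≃ Fin n :=
  finSumFinEquiv.trans (finCongr (by omega))

@[simp] lemma blk_inl_val (h : i ≤ n) (a : Fin i) : ((blk h) (Sum.inl a) : ℕ) = a := rfl

@[simp] lemma blk_inr_val (h : i ≤ n) (b : Fin (n - i)) : ((blk h) (Sum.inr b) : ℕ) = i + b := rfl

/-- embedding of a pair of permutations of the blocks -/
def emb (h : i ≤ n) (α : Perm (Fin i)) (β : Perm (Fin (n - i))) : Perm (Fin n) :=
  (blk h).permCongr (α.sumCongr β)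

@[simp] lemma emb_inl (h : i ≤ n) (α : Perm (Fin i)) (β : Perm (Fin (n - i))) (a : Fin i) :
    emb h α β (blk h (Sum.inl a)) = blk h (Sum.inl (α a)) := by
  simp [emb, Equiv.permCongr_apply]

@[simp] lemma emb_inr (h : i ≤ n) (α : Perm (Fin i)) (β : Perm (Fin (n - i))) (b : Fin (n - i)) :
    emb h α β (blk h (Sum.inr b)) = blk h (Sum.inr (β b)) := by
  simp [emb, Equiv.permCongr_apply]

lemma emb_inv (h : i ≤ n) (α : Perm (Fin i)) (β : Perm (Fin (n - i))) :
    (emb h α β)⁻¹ = emb h α⁻¹ β⁻¹ := by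
  refine Equiv.ext fun x => ?_
  rw [Equiv.Perm.inv_eq_iff_eq]
  obtain ⟨u, rfl⟩ := (blk h).surjective x
  cases u <;> simp

/-- "Grassmannian" condition: increasing on each block -/
def Grass (h : i ≤ n) (c : Perm (Fin n)) : Prop :=
  StrictMono (fun a : Fin i => c (blk h (Sum.inl a))) ∧
    StrictMono (fun b : Fin (n - i) => c (blk h (Sum.inr b)))

instance (h : i ≤ n) : DecidablePred (Grass h) := fun _ => by
  unfold Grass StrictMono; infer_instance


lemma blk_inl_lt_inl (h : i ≤ n) {a b : Fin i} : blk h (Sum.inl a) < blk h (Sum.inl b) ↔ a < b := by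
  rw [Fin.lt_def, blk_inl_val, blk_inl_val, Fin.lt_def]
lemma blk_inr_lt_inr (h : i ≤ n) {a b : Fin (n-i)} :
    blk h (Sum.inr a) < blk h (Sum.inr b) ↔ a < b := by
  rw [Fin.lt_def, blk_inr_val, blk_inr_val, Fin.lt_def]; omega
lemma blk_inl_lt_inr (h : i ≤ n) (a : Fin i) (b : Fin (n-i)) :
    blk h (Sum.inl a) < blk h (Sum.inr b) := by
  simp [Fin.lt_def]; omega
lemma not_blk_inr_lt_inl (h : i ≤ n) (a : Fin i) (b : Fin (n-i)) :
    ¬ blk h (Sum.inr b) < blk h (Sum.inl a) := by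
  simp [Fin.lt_def]; omega

lemma inversions_eq_sum {m : ℕ} (σ : Perm (Fin m)) :
    inversions σ = ∑ a : Fin m, ∑ b : Fin m, (if a < b ∧ σ b < σ a then 1 else 0) := by
  rw [inversions, Finset.card_filter]
  exact Fintype.sum_prod_type _

def crossCount (h : i ≤ n) (c : Perm (Fin n)) : ℕ :=
  ∑ a : Fin i, ∑ b : Fin (n-i), if c (blk h (Sum.inr b)) < c (blk h (Sum.inl a)) then 1 else 0

lemma inversions_mul (h : i ≤ n) {c : Perm (Fin n)} (hc : Grass h c)
    (α : Perm (Fin i)) (β : Perm (Fin (n-i))) :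
    inversions (c * emb h α β) = crossCount h c + inversions α + inversions β := by
  rw [inversions_eq_sum]
  rw [← Equiv.sum_comp (blk h) (fun a => ∑ b : Fin n,
      (if a < b ∧ (c * emb h α β) b < (c * emb h α β) a then 1 else 0))]
  have inner : ∀ a : Fin n, ∑ b : Fin n,
      (if a < b ∧ (c * emb h α β) b < (c * emb h α β) a then 1 else 0) =
      ∑ u : Fin i ⊕ Fin (n-i),
      (if a < blk h u ∧ (c * emb h α β) (blk h u) < (c * emb h α β) a then 1 else 0) := by
    intro a
    rw [← Equiv.sum_comp (blk h)]
  simp only [inner, Fintype.sum_sum_type]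
  simp only [Equiv.Perm.mul_apply, emb_inl, emb_inr]
  have e1 : ∀ a b : Fin i,
      (if blk h (Sum.inl a) < blk h (Sum.inl b) ∧
        c (blk h (Sum.inl (α b))) < c (blk h (Sum.inl (α a))) then 1 else 0) =
      (if a < b ∧ α b < α a then 1 else 0) := by
    intro a b
    exact if_congr (and_congr (blk_inl_lt_inl h) (hc.1.lt_iff_lt)) rfl rfl
  have e2 : ∀ a b : Fin (n-i),
      (if blk h (Sum.inr a) < blk h (Sum.inr b) ∧
        c (blk h (Sum.inr (β b))) < c (blk h (Sum.inr (β a))) then 1 else 0) =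
      (if a < b ∧ β b < β a then 1 else 0) := by
    intro a b
    exact if_congr (and_congr (blk_inr_lt_inr h) (hc.2.lt_iff_lt)) rfl rfl
  have e3 : ∀ (a : Fin i) (b : Fin (n-i)),
      (if blk h (Sum.inl a) < blk h (Sum.inr b) ∧
        c (blk h (Sum.inr (β b))) < c (blk h (Sum.inl (α a))) then 1 else 0) =
      (if c (blk h (Sum.inr (β b))) < c (blk h (Sum.inl (α a))) then 1 else 0) := by
    intro a b
    exact if_congr (and_iff_right (blk_inl_lt_inr h a b)) rfl rfl
  have e4 : ∀ (b : Fin (n-i)) (a : Fin i),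
      (if blk h (Sum.inr b) < blk h (Sum.inl a) ∧
        c (blk h (Sum.inl (α a))) < c (blk h (Sum.inr (β b))) then 1 else 0) = 0 := by
    intro b a
    rw [if_neg]
    exact fun hh => not_blk_inr_lt_inl h a b hh.1
  simp only [e1, e2, e3, e4, Finset.sum_const_zero, add_zero, zero_add]
  have cross : ∑ a : Fin i, ∑ b : Fin (n-i),
      (if c (blk h (Sum.inr (β b))) < c (blk h (Sum.inl (α a))) then 1 else 0) =
      crossCount h c := by
    rw [crossCount]
    rw [← Equiv.sum_comp α (fun a => ∑ b : Fin (n-i),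
        (if c (blk h (Sum.inr b)) < c (blk h (Sum.inl a)) then 1 else 0))]
    refine Finset.sum_congr rfl fun a _ => ?_
    rw [← Equiv.sum_comp β (fun b => (if c (blk h (Sum.inr b)) < c (blk h (Sum.inl (α a))) then 1 else 0))]
  rw [Finset.sum_add_distrib]
  rw [cross, ← inversions_eq_sum α, ← inversions_eq_sum β]
  ring

lemma emb_one (h : i ≤ n) : emb h 1 1 = 1 := by
  refine Equiv.ext fun x => ?_
  obtain ⟨u, rfl⟩ := (blk h).surjective x
  cases u <;> simp

lemma inversions_one {m : ℕ} : inversions (1 : Perm (Fin m)) = 0 := by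
  rw [inversions, Finset.card_eq_zero, Finset.filter_eq_empty_iff]
  rintro p -
  simp only [Equiv.Perm.one_apply]
  rintro ⟨h1, h2⟩
  exact absurd h1 (not_lt.2 h2.le)

lemma inversions_grass (h : i ≤ n) {c : Perm (Fin n)} (hc : Grass h c) :
    inversions c = crossCount h c := by
  have := inversions_mul h hc 1 1
  rwa [emb_one, mul_one, inversions_one, inversions_one, add_zero, add_zero] at this

lemma inversions_mul' (h : i ≤ n) {c : Perm (Fin n)} (hc : Grass h c)
    (α : Perm (Fin i)) (β : Perm (Fin (n-i))) :
    inversions (c * emb h α β) = inversions c + inversions α + inversions β := by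
  rw [inversions_mul h hc, inversions_grass h hc]

/-- the `α`-part of a permutation -/
def pa (h : i ≤ n) (σ : Perm (Fin n)) : Perm (Fin i) :=
  (Tuple.sort (fun a : Fin i => σ (blk h (Sum.inl a))))⁻¹
def pb (h : i ≤ n) (σ : Perm (Fin n)) : Perm (Fin (n-i)) :=
  (Tuple.sort (fun b : Fin (n-i) => σ (blk h (Sum.inr b))))⁻¹
def pc (h : i ≤ n) (σ : Perm (Fin n)) : Perm (Fin n) :=
  σ * (emb h (pa h σ) (pb h σ))⁻¹

lemma pc_apply_inl (h : i ≤ n) (σ : Perm (Fin n)) (a : Fin i) :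
    pc h σ (blk h (Sum.inl a)) = σ (blk h (Sum.inl ((pa h σ)⁻¹ a))) := by
  rw [pc, emb_inv, Equiv.Perm.mul_apply, emb_inl]
lemma pc_apply_inr (h : i ≤ n) (σ : Perm (Fin n)) (b : Fin (n-i)) :
    pc h σ (blk h (Sum.inr b)) = σ (blk h (Sum.inr ((pb h σ)⁻¹ b))) := by
  rw [pc, emb_inv, Equiv.Perm.mul_apply, emb_inr]

lemma grass_pc (h : i ≤ n) (σ : Perm (Fin n)) : Grass h (pc h σ) := by
  constructor
  · have : (fun a : Fin i => pc h σ (blk h (Sum.inl a))) =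
        (fun a : Fin i => σ (blk h (Sum.inl a))) ∘ (Tuple.sort (fun a : Fin i => σ (blk h (Sum.inl a)))) := by
      funext a
      rw [pc_apply_inl, pa, inv_inv]
      rfl
    rw [this]
    refine (Tuple.monotone_sort _).strictMono_of_injective ?_
    exact (σ.injective.comp ((blk h).injective.comp Sum.inl_injective)).comp (Equiv.injective _)
  · have : (fun b : Fin (n-i) => pc h σ (blk h (Sum.inr b))) =
        (fun b : Fin (n-i) => σ (blk h (Sum.inr b))) ∘ (Tuple.sort (fun b : Fin (n-i) => σ (blk h (Sum.inr b)))) := by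
      funext b
      rw [pc_apply_inr, pb, inv_inv]
      rfl
    rw [this]
    refine (Tuple.monotone_sort _).strictMono_of_injective ?_
    exact (σ.injective.comp ((blk h).injective.comp Sum.inr_injective)).comp (Equiv.injective _)

lemma pc_mul (h : i ≤ n) (σ : Perm (Fin n)) : pc h σ * emb h (pa h σ) (pb h σ) = σ := by
  rw [pc, inv_mul_cancel_right]

lemma pa_eq (h : i ≤ n) {c : Perm (Fin n)} (hc : Grass h c)
    (α : Perm (Fin i)) (β : Perm (Fin (n-i))) : pa h (c * emb h α β) = α := by
  have hg : (fun a : Fin i => (c * emb h α β) (blk h (Sum.inl a))) =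
      (fun a : Fin i => c (blk h (Sum.inl a))) ∘ α := by
    funext a; simp
  set g := fun a : Fin i => (c * emb h α β) (blk h (Sum.inl a)) with hgdef
  have hinj : Function.Injective g :=
    (c * emb h α β).injective.comp ((blk h).injective.comp Sum.inl_injective)
  have h1 : Monotone (g ∘ Tuple.sort g) := Tuple.monotone_sort g
  have h2 : Monotone (g ∘ (α⁻¹ : Perm (Fin i))) := by
    have : g ∘ (α⁻¹ : Perm (Fin i)) = fun a : Fin i => c (blk h (Sum.inl a)) := by
      funext a; simp [hg]
    rw [this]
    exact hc.1.monotone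
  have := Tuple.unique_monotone h1 h2
  have hs : (Tuple.sort g : Fin i → Fin i) = (α⁻¹ : Perm (Fin i)) := by
    funext a
    exact hinj (congrFun this a)
  rw [pa, ← hgdef]
  rw [show Tuple.sort g = α⁻¹ from Equiv.ext fun a => congrFun hs a, inv_inv]

lemma pb_eq (h : i ≤ n) {c : Perm (Fin n)} (hc : Grass h c)
    (α : Perm (Fin i)) (β : Perm (Fin (n-i))) : pb h (c * emb h α β) = β := by
  have hg : (fun b : Fin (n-i) => (c * emb h α β) (blk h (Sum.inr b))) =
      (fun b : Fin (n-i) => c (blk h (Sum.inr b))) ∘ β := by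
    funext b; simp
  set g := fun b : Fin (n-i) => (c * emb h α β) (blk h (Sum.inr b)) with hgdef
  have hinj : Function.Injective g :=
    (c * emb h α β).injective.comp ((blk h).injective.comp Sum.inr_injective)
  have h1 : Monotone (g ∘ Tuple.sort g) := Tuple.monotone_sort g
  have h2 : Monotone (g ∘ (β⁻¹ : Perm (Fin (n-i)))) := by
    have : g ∘ (β⁻¹ : Perm (Fin (n-i))) = fun b : Fin (n-i) => c (blk h (Sum.inr b)) := by
      funext b; simp [hg]
    rw [this]
    exact hc.2.monotone
  have := Tuple.unique_monotone h1 h2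
  have hs : (Tuple.sort g : Fin (n-i) → Fin (n-i)) = (β⁻¹ : Perm (Fin (n-i))) := by
    funext b
    exact hinj (congrFun this b)
  rw [pb, ← hgdef]
  rw [show Tuple.sort g = β⁻¹ from Equiv.ext fun b => congrFun hs b, inv_inv]

lemma pc_eq (h : i ≤ n) {c : Perm (Fin n)} (hc : Grass h c)
    (α : Perm (Fin i)) (β : Perm (Fin (n-i))) : pc h (c * emb h α β) = c := by
  rw [pc, pa_eq h hc, pb_eq h hc, mul_inv_cancel_right]


noncomputable def P (m : ℕ) : Polynomial ℚ := ∑ σ : Perm (Fin m), Polynomial.X ^ inversions σ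

noncomputable def K (h : i ≤ n) : Polynomial ℚ :=
  ∑ c ∈ Finset.univ.filter (Grass h), Polynomial.X ^ inversions c

/-- the decomposition bijection -/
def dec (h : i ≤ n) : ({c : Perm (Fin n) // Grass h c} × Perm (Fin i) × Perm (Fin (n-i))) ≃
    Perm (Fin n) where
  toFun t := t.1.1 * emb h t.2.1 t.2.2
  invFun σ := (⟨pc h σ, grass_pc h σ⟩, pa h σ, pb h σ)
  left_inv := by
    rintro ⟨⟨c, hc⟩, α, β⟩
    refine Prod.ext (Subtype.ext ?_) (Prod.ext ?_ ?_) <;>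
      simp [pa_eq h hc, pb_eq h hc, pc_eq h hc]
  right_inv := fun σ => pc_mul h σ

lemma P_decomp (h : i ≤ n) : P n = K h * P i * P (n - i) := by
  calc P n = ∑ t : {c : Perm (Fin n) // Grass h c} × Perm (Fin i) × Perm (Fin (n-i)),
        Polynomial.X ^ inversions (dec h t) :=
      (Equiv.sum_comp (dec h) (fun σ => Polynomial.X ^ inversions σ)).symm
    _ = ∑ t : {c : Perm (Fin n) // Grass h c} × Perm (Fin i) × Perm (Fin (n-i)),
        Polynomial.X ^ (inversions t.1.1 + inversions t.2.1 + inversions t.2.2) := by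
      refine Finset.sum_congr rfl fun t _ => ?_
      rw [show dec h t = t.1.1 * emb h t.2.1 t.2.2 from rfl, inversions_mul' h t.1.2]
    _ = ∑ c : {c : Perm (Fin n) // Grass h c}, ∑ α : Perm (Fin i), ∑ β : Perm (Fin (n-i)),
        Polynomial.X ^ (inversions c.1 + inversions α + inversions β) := by
      rw [Fintype.sum_prod_type]
      exact Finset.sum_congr rfl fun c _ => Fintype.sum_prod_type _
    _ = ∑ c ∈ Finset.univ.filter (Grass h), ∑ α : Perm (Fin i), ∑ β : Perm (Fin (n-i)),
        Polynomial.X ^ (inversions c + inversions α + inversions β) := by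
      rw [Finset.sum_subtype (p := Grass h) (Finset.univ.filter (Grass h)) (fun x => by simp)
        (fun c => ∑ α : Perm (Fin i), ∑ β : Perm (Fin (n-i)),
          Polynomial.X ^ (inversions c + inversions α + inversions β))]
    _ = K h * P i * P (n - i) := by
      rw [K, P, P, Finset.sum_mul_sum, Finset.sum_mul_sum]
      refine Finset.sum_congr rfl fun c _ => ?_
      rw [Finset.sum_comm]
      refine Finset.sum_congr rfl fun β _ => ?_
      rw [Finset.sum_mul]
      refine Finset.sum_congr rfl fun α _ => ?_
      rw [pow_add, pow_add]

lemma P_one : P 1 = 1 := by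
  rw [P, Finset.sum_eq_single_of_mem (1 : Perm (Fin 1)) (Finset.mem_univ _)]
  · rw [inversions_one, pow_zero]
  · intro b _ hb
    exact absurd (Subsingleton.elim b 1) hb

lemma P_zero : P 0 = 1 := by
  rw [P, Finset.sum_eq_single_of_mem (1 : Perm (Fin 0)) (Finset.mem_univ _)]
  · rw [inversions_one, pow_zero]
  · intro b _ hb
    exact absurd (Subsingleton.elim b 1) hb

lemma sum_indicator_lt (M k : ℕ) (hk : k ≤ M) :
    ∑ b : Fin M, (if (b : ℕ) < k then 1 else 0) = k := by
  rw [Fin.sum_univ_eq_sum_range (fun j => if j < k then 1 else 0) M, ← Finset.card_filter]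
  have : (Finset.range M).filter (· < k) = Finset.range k := by
    ext j
    simp only [Finset.mem_filter, Finset.mem_range]
    omega
  rw [this, Finset.card_range]

section Kone
variable {m : ℕ}

def bcast (b : Fin (m+1-1)) : Fin m := ⟨b.1, by omega⟩

lemma blk1_inl (h : (1:ℕ) ≤ m+1) (a : Fin 1) : blk h (Sum.inl a) = (0 : Fin (m+1)) := by
  apply Fin.ext
  rw [blk_inl_val]
  simp [Fin.val_eq_zero]

lemma blk1_inr (h : (1:ℕ) ≤ m+1) (b : Fin (m+1-1)) :
    blk h (Sum.inr b) = Fin.succ (bcast b) := by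
  apply Fin.ext
  rw [blk_inr_val, Fin.val_succ]
  simp [bcast, Nat.add_comm]

lemma grass_cyc (h : (1:ℕ) ≤ m+1) (v : Fin (m+1)) : Grass h (Fin.cycleRange v)⁻¹ := by
  constructor
  · intro a b hab
    exact absurd hab (by omega)
  · intro a b hab
    show (Fin.cycleRange v)⁻¹ (blk h (Sum.inr a)) < (Fin.cycleRange v)⁻¹ (blk h (Sum.inr b))
    rw [blk1_inr, blk1_inr]
    show (Fin.cycleRange v).symm _ < (Fin.cycleRange v).symm _
    rw [Fin.cycleRange_symm_succ, Fin.cycleRange_symm_succ]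
    exact Fin.strictMono_succAbove v hab

lemma cyc_uniq (h : (1:ℕ) ≤ m+1) {c : Perm (Fin (m+1))} (hc : Grass h c) :
    c = (Fin.cycleRange (c 0))⁻¹ := by
  set v := c 0 with hv
  have hrange : Set.range (fun b : Fin m => c (Fin.succ b)) = {v}ᶜ := by
    have e1 : (fun b : Fin m => c (Fin.succ b)) = c ∘ Fin.succ := rfl
    rw [e1, Set.range_comp, Fin.range_succ, Set.image_compl_eq c.bijective,
      Set.image_singleton]
  have h2 : StrictMono (fun b : Fin (m+1-1) => c (blk h (Sum.inr b))) := hc.2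
  have hmono : StrictMono (fun b : Fin m => c (Fin.succ b)) := by
    intro a b hab
    have hab' : (⟨a.1, by omega⟩ : Fin (m+1-1)) < ⟨b.1, by omega⟩ := hab
    have h3 := h2 hab'
    simp only [blk1_inr] at h3
    have ea : bcast (⟨a.1, by omega⟩ : Fin (m+1-1)) = a := Fin.ext rfl
    have eb : bcast (⟨b.1, by omega⟩ : Fin (m+1-1)) = b := Fin.ext rfl
    rw [ea, eb] at h3
    exact h3
  have hmono2 : StrictMono (Fin.succAbove v) := Fin.strictMono_succAbove v
  have heq : (fun b : Fin m => c (Fin.succ b)) = Fin.succAbove v := by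
    have hr2 : Set.range (fun b : Fin m => c (Fin.succ b)) = Set.range (Fin.succAbove v) := by
      rw [hrange, Fin.range_succAbove]
    exact (@StrictMono.range_inj (Fin m) (Fin (m+1)) _ _ (inferInstance : WellFoundedLT (Fin m)) _ _ hmono hmono2).1 hr2
  refine Equiv.ext fun x => ?_
  refine Fin.cases ?_ ?_ x
  · show c 0 = (Fin.cycleRange v).symm 0
    rw [Fin.cycleRange_symm_zero, hv]
  · intro j
    show c (Fin.succ j) = (Fin.cycleRange v).symm (Fin.succ j)
    rw [Fin.cycleRange_symm_succ, ← heq]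

lemma inversions_cyc (h : (1:ℕ) ≤ m+1) (v : Fin (m+1)) :
    inversions (Fin.cycleRange v)⁻¹ = (v : ℕ) := by
  rw [inversions_grass h (grass_cyc h v), crossCount, Fin.sum_univ_one]
  have key : ∀ b : Fin (m+1-1),
      ((Fin.cycleRange v)⁻¹ (blk h (Sum.inr b)) < (Fin.cycleRange v)⁻¹ (blk h (Sum.inl 0)))
      ↔ ((b : ℕ) < (v : ℕ)) := by
    intro b
    rw [blk1_inr, blk1_inl]
    show (Fin.cycleRange v).symm _ < (Fin.cycleRange v).symm _ ↔ _
    rw [Fin.cycleRange_symm_succ, Fin.cycleRange_symm_zero,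
      Fin.succAbove_lt_iff_castSucc_lt, Fin.lt_def, Fin.coe_castSucc]
    show (bcast b : ℕ) < _ ↔ _
    simp [bcast]
  have e1 : ∀ b : Fin (m+1-1),
      (if (Fin.cycleRange v)⁻¹ (blk h (Sum.inr b)) <
          (Fin.cycleRange v)⁻¹ (blk h (Sum.inl 0)) then 1 else 0) =
      (if (b : ℕ) < (v : ℕ) then 1 else 0) := fun b => if_congr (key b) rfl rfl
  rw [Finset.sum_congr rfl (fun b _ => e1 b)]
  exact sum_indicator_lt (m+1-1) v (by omega)

lemma K_one (h : (1:ℕ) ≤ m+1) : K h = qInt (m+1) := by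
  rw [K, qInt, ← Fin.sum_univ_eq_sum_range (fun j => (Polynomial.X : Polynomial ℚ) ^ j) (m+1)]
  refine Finset.sum_nbij' (fun c => c 0) (fun v => (Fin.cycleRange v)⁻¹) ?_ ?_ ?_ ?_ ?_
  · intro c _; exact Finset.mem_univ _
  · intro v _
    simp only [Finset.mem_filter, Finset.mem_univ, true_and]
    exact grass_cyc h v
  · intro c hc
    simp only [Finset.mem_filter, Finset.mem_univ, true_and] at hc
    exact (cyc_uniq h hc).symm
  · intro v _
    show (Fin.cycleRange v).symm 0 = v
    exact Fin.cycleRange_symm_zero v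
  · intro c hc
    simp only [Finset.mem_filter, Finset.mem_univ, true_and] at hc
    rw [cyc_uniq h hc, inversions_cyc h, ← cyc_uniq h hc]

end Kone

lemma P_eq_qFact (m : ℕ) : P m = qFact m := by
  induction m with
  | zero => rw [P_zero, qFact]; simp
  | succ m ih =>
    have h1 : (1:ℕ) ≤ m + 1 := by omega
    have hd := P_decomp h1
    rw [K_one h1, P_one, show ((m+1) - 1) = m from rfl, ih] at hd
    rw [hd]
    conv_rhs => rw [qFact, Finset.prod_range_succ]
    rw [← qFact]
    ring


def SuffInc (i : ℕ) {n : ℕ} (σ : Perm (Fin n)) : Prop :=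
  ∀ p q : Fin n, (p : ℕ) + 1 = (q : ℕ) → i ≤ (p : ℕ) → σ p < σ q

def NoCABelow (i : ℕ) {n : ℕ} (σ τ : Perm (Fin n)) : Prop :=
  ∀ p q : Fin n, (p : ℕ) + 1 = (q : ℕ) → (q : ℕ) < i → ¬(σ p < σ q ∧ τ p < τ q)

def Bcond (i : ℕ) {n : ℕ} (t : Perm (Fin n) × Perm (Fin n)) : Prop :=
  SuffInc i t.1 ∧ SuffInc i t.2 ∧ NoCABelow i t.1 t.2

instance {n : ℕ} (i : ℕ) : DecidablePred (Bcond i (n := n)) := fun _ => by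
  unfold Bcond SuffInc NoCABelow; infer_instance

noncomputable def G (n i : ℕ) : Polynomial ℚ :=
  ∑ t ∈ Finset.univ.filter (Bcond i (n := n)),
    Polynomial.X ^ (inversions t.1 + inversions t.2)

lemma G_top : G n n = W n := by
  rw [G, W]
  apply Finset.sum_congr _ (fun _ _ => rfl)
  apply Finset.filter_congr
  intro t _
  constructor
  · rintro ⟨-, -, hno⟩
    rintro ⟨p, q, hpq, h1, h2⟩
    exact hno p q hpq q.isLt ⟨h1, h2⟩
  · intro hno
    refine ⟨?_, ?_, ?_⟩
    · intro p q hpq hip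
      exact absurd q.isLt (by omega)
    · intro p q hpq hip
      exact absurd q.isLt (by omega)
    · intro p q hpq _ hca
      exact hno ⟨p, q, hpq, hca.1, hca.2⟩

lemma exists_inl (h : i ≤ n) {p : Fin n} (hp : (p : ℕ) < i) :
    ∃ a : Fin i, blk h (Sum.inl a) = p := ⟨⟨p, hp⟩, Fin.ext (blk_inl_val h _)⟩

lemma exists_inr (h : i ≤ n) {p : Fin n} (hp : i ≤ (p : ℕ)) :
    ∃ b : Fin (n - i), blk h (Sum.inr b) = p := by
  refine ⟨⟨p - i, by omega⟩, Fin.ext ?_⟩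
  rw [blk_inr_val]
  simp
  omega

lemma strictMono_of_consec {M : ℕ} {f : Fin M → Fin n}
    (hf : ∀ a b : Fin M, (a : ℕ) + 1 = (b : ℕ) → f a < f b) : StrictMono f := by
  have key : ∀ d (a b : Fin M), (b : ℕ) = (a : ℕ) + d + 1 → f a < f b := by
    intro d
    induction d with
    | zero => intro a b hb; exact hf a b (by omega)
    | succ d ih =>
      intro a b hb
      have hm : (a : ℕ) + d + 1 < M := by omega
      set mid : Fin M := ⟨(a : ℕ) + d + 1, hm⟩ with hmiddef
      have hmid : (mid : ℕ) = (a : ℕ) + d + 1 := rfl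
      exact (ih a mid hmid.symm).trans (hf mid b (by omega))
  intro a b hab
  exact key ((b : ℕ) - (a : ℕ) - 1) a b (by omega)

lemma pb_eq_one (h : i ≤ n) {σ : Perm (Fin n)} (hs : SuffInc i σ) : pb h σ = 1 := by
  have hmono : Monotone (fun b : Fin (n - i) => σ (blk h (Sum.inr b))) := by
    refine (strictMono_of_consec ?_).monotone
    intro a b hab
    refine hs (blk h (Sum.inr a)) (blk h (Sum.inr b)) ?_ ?_
    · rw [blk_inr_val, blk_inr_val]; omega
    · rw [blk_inr_val]; omega
  rw [pb, Tuple.sort_eq_refl_iff_monotone.2 hmono]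
  rfl

lemma suffInc_emb (h : i ≤ n) {c : Perm (Fin n)} (hc : Grass h c) (α : Perm (Fin i)) :
    SuffInc i (c * emb h α 1) := by
  intro p q hpq hip
  obtain ⟨b, rfl⟩ := exists_inr h hip
  obtain ⟨b', rfl⟩ := exists_inr h (show i ≤ (q : ℕ) by omega)
  rw [Equiv.Perm.mul_apply, Equiv.Perm.mul_apply, emb_inr, emb_inr]
  refine hc.2 ?_
  show ((1 : Perm (Fin (n-i))) b) < ((1 : Perm (Fin (n-i))) b')
  rw [blk_inr_val, blk_inr_val] at hpq
  simp only [Equiv.Perm.one_apply]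
  rw [Fin.lt_def]
  omega

lemma noCABelow_emb (h : i ≤ n) {c c' : Perm (Fin n)} (hc : Grass h c) (hc' : Grass h c')
    (α α' : Perm (Fin i)) :
    NoCABelow i (c * emb h α 1) (c' * emb h α' 1) ↔ ¬ CommonAscent α α' := by
  constructor
  · intro hno
    rintro ⟨a, b, hab, h1, h2⟩
    refine hno (blk h (Sum.inl a)) (blk h (Sum.inl b)) ?_ ?_ ?_
    · rw [blk_inl_val, blk_inl_val]; exact hab
    · rw [blk_inl_val]; exact b.isLt
    · constructor
      · rw [Equiv.Perm.mul_apply, Equiv.Perm.mul_apply, emb_inl, emb_inl]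
        exact hc.1 h1
      · rw [Equiv.Perm.mul_apply, Equiv.Perm.mul_apply, emb_inl, emb_inl]
        exact hc'.1 h2
  · intro hno p q hpq hq hca
    obtain ⟨b, rfl⟩ := exists_inl h hq
    obtain ⟨a, rfl⟩ := exists_inl h (show (p : ℕ) < i by omega)
    rw [blk_inl_val, blk_inl_val] at hpq
    obtain ⟨h1, h2⟩ := hca
    rw [Equiv.Perm.mul_apply, Equiv.Perm.mul_apply, emb_inl, emb_inl] at h1 h2
    exact hno ⟨a, b, hpq, hc.1.lt_iff_lt.1 h1, hc'.1.lt_iff_lt.1 h2⟩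

lemma G_eq (h : i ≤ n) : G n i = K h ^ 2 * W i := by
  have target : K h ^ 2 * W i =
      ∑ x ∈ ((Finset.univ.filter (Grass h)) ×ˢ (Finset.univ.filter (Grass h))) ×ˢ
        (Finset.univ.filter
          (fun z : Perm (Fin i) × Perm (Fin i) => ¬ CommonAscent z.1 z.2)),
        Polynomial.X ^ inversions x.1.1 * Polynomial.X ^ inversions x.1.2 *
          Polynomial.X ^ (inversions x.2.1 + inversions x.2.2) := by
    rw [Finset.sum_product, Finset.sum_product]
    rw [sq, K, W, Finset.sum_mul_sum, Finset.sum_mul_sum]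
    refine Finset.sum_congr rfl fun c _ => ?_
    rw [Finset.sum_comm]
    refine Finset.sum_congr rfl fun z _ => ?_
    rw [Finset.sum_mul]
  rw [target, G]
  refine Finset.sum_nbij' (fun t => ((pc h t.1, pc h t.2), (pa h t.1, pa h t.2)))
    (fun x => (x.1.1 * emb h x.2.1 1, x.1.2 * emb h x.2.2 1)) ?_ ?_ ?_ ?_ ?_
  · rintro ⟨σ, τ⟩ ht
    rw [Finset.mem_filter] at ht
    obtain ⟨-, h1, h2, h3⟩ := ht
    simp only [Finset.mem_product, Finset.mem_filter, Finset.mem_univ, true_and]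
    refine ⟨⟨grass_pc h σ, grass_pc h τ⟩, ?_⟩
    have e1 : σ = pc h σ * emb h (pa h σ) 1 := by
      conv_lhs => rw [← pc_mul h σ, pb_eq_one h h1]
    have e2 : τ = pc h τ * emb h (pa h τ) 1 := by
      conv_lhs => rw [← pc_mul h τ, pb_eq_one h h2]
    rw [e1, e2] at h3
    exact (noCABelow_emb h (grass_pc h σ) (grass_pc h τ) _ _).1 h3
  · rintro ⟨⟨c, c'⟩, α, α'⟩ hx
    simp only [Finset.mem_product, Finset.mem_filter, Finset.mem_univ, true_and] at hx
    obtain ⟨⟨hc, hc'⟩, hno⟩ := hx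
    rw [Finset.mem_filter]
    refine ⟨Finset.mem_univ _, suffInc_emb h hc α, suffInc_emb h hc' α', ?_⟩
    exact (noCABelow_emb h hc hc' α α').2 hno
  · rintro ⟨σ, τ⟩ ht
    rw [Finset.mem_filter] at ht
    obtain ⟨-, h1, h2, -⟩ := ht
    have e1 : pc h σ * emb h (pa h σ) 1 = σ := by
      rw [← pb_eq_one h h1, pc_mul]
    have e2 : pc h τ * emb h (pa h τ) 1 = τ := by
      rw [← pb_eq_one h h2, pc_mul]
    simp only [e1, e2]
  · rintro ⟨⟨c, c'⟩, α, α'⟩ hx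
    simp only [Finset.mem_product, Finset.mem_filter, Finset.mem_univ, true_and] at hx
    obtain ⟨⟨hc, hc'⟩, -⟩ := hx
    simp only [pa_eq h hc, pa_eq h hc', pc_eq h hc, pc_eq h hc']
  · rintro ⟨σ, τ⟩ ht
    rw [Finset.mem_filter] at ht
    obtain ⟨-, h1, h2, -⟩ := ht
    have e1 : σ = pc h σ * emb h (pa h σ) (pb h σ) := (pc_mul h σ).symm
    have e2 : τ = pc h τ * emb h (pa h τ) (pb h τ) := (pc_mul h τ).symm
    conv_lhs => rw [e1, e2]
    rw [inversions_mul' h (grass_pc h σ), inversions_mul' h (grass_pc h τ)]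
    rw [pb_eq_one h h1, pb_eq_one h h2, inversions_one]
    dsimp only
    simp only [add_zero]
    ring

lemma suffInc_mono {σ : Perm (Fin n)} {j k : ℕ} (hjk : j ≤ k) (hs : SuffInc j σ) :
    SuffInc k σ := fun p q hpq hip => hs p q hpq (by omega)

lemma noCABelow_anti {σ τ : Perm (Fin n)} {j k : ℕ} (hjk : j ≤ k) (hs : NoCABelow k σ τ) :
    NoCABelow j σ τ := fun p q hpq hq => hs p q hpq (by omega)

lemma involution (hn : 1 ≤ n) :
    ∑ j ∈ Finset.range (n + 1), (-1 : Polynomial ℚ) ^ j * G n j = 0 := by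
  simp only [G, Finset.sum_filter, Finset.mul_sum]
  rw [Finset.sum_comm]
  refine Finset.sum_eq_zero fun t _ => ?_
  obtain ⟨σ, τ⟩ := t
  set S : ℕ → Prop := fun j => SuffInc j σ ∧ SuffInc j τ with hSdef
  haveI : DecidablePred S := fun j => by
    rw [hSdef]; unfold SuffInc; infer_instance
  have hSn : S n := by
    constructor <;> exact fun p q hpq hip => absurd p.isLt (by omega)
  set s : ℕ := Nat.find ⟨n, hSn⟩ with hsdef
  have hSs : S s := Nat.find_spec ⟨n, hSn⟩
  have hmin : ∀ j < s, ¬ S j := fun j hj => Nat.find_min ⟨n, hSn⟩ hj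
  have hs_le : s ≤ n - 1 := by
    have : S (n - 1) := by
      constructor <;>
        exact fun p q hpq hip => absurd q.isLt (by omega)
    have h2 : s ≤ n - 1 := Nat.find_le (h := ⟨n, hSn⟩) this
    omega
  have hBiff : ∀ j, Bcond j (σ, τ) ↔ (s ≤ j ∧ NoCABelow j σ τ) := by
    intro j
    constructor
    · rintro ⟨h1, h2, h3⟩
      refine ⟨?_, h3⟩
      by_contra hc
      exact hmin j (by omega) ⟨h1, h2⟩
    · rintro ⟨h1, h3⟩
      exact ⟨suffInc_mono h1 hSs.1, suffInc_mono h1 hSs.2, h3⟩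
  by_cases hP : NoCABelow s σ τ
  · -- the support is exactly {s, s+1}
    have hB : ∀ j ≤ n, (Bcond j (σ, τ) ↔ (j = s ∨ j = s + 1)) := by
      intro j hjn
      rw [hBiff]
      constructor
      · rintro ⟨h1, h3⟩
        by_contra hc
        push_neg at hc
        have hj2 : s + 2 ≤ j := by omega
        have hq : s + 1 < n := by omega
        refine h3 ⟨s, by omega⟩ ⟨s + 1, hq⟩ rfl (by simp only [Fin.val_mk]; omega) ⟨?_, ?_⟩
        · exact hSs.1 _ _ rfl (by simp only [Fin.val_mk]; omega)
        · exact hSs.2 _ _ rfl (by simp only [Fin.val_mk]; omega)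
      · rintro (rfl | rfl)
        · exact ⟨le_refl _, hP⟩
        · refine ⟨by omega, ?_⟩
          intro p q hpq hq hca
          rcases Nat.lt_or_ge (q : ℕ) s with hqs | hqs
          · exact hP p q hpq hqs hca
          · have hqq : (q : ℕ) = s := by omega
            have hs1 : 1 ≤ s := by omega
            have hnS : ¬ S (s - 1) := hmin (s - 1) (by omega)
            rw [hSdef] at hnS
            rcases not_and_or.1 hnS with hno | hno
            · unfold SuffInc at hno
              push_neg at hno
              obtain ⟨p', q', hpq', hp', hlt'⟩ := hno
              have hps : (p' : ℕ) = s - 1 := by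
                rcases Nat.lt_or_ge (p' : ℕ) s with h' | h'
                · omega
                · exact absurd (hSs.1 p' q' hpq' h') (not_lt.2 hlt')
              have hpp : p = p' := Fin.ext (by omega)
              have hqq' : q = q' := Fin.ext (by omega)
              rw [hpp, hqq'] at hca
              exact absurd hca.1 (not_lt.2 hlt')
            · unfold SuffInc at hno
              push_neg at hno
              obtain ⟨p', q', hpq', hp', hlt'⟩ := hno
              have hps : (p' : ℕ) = s - 1 := by
                rcases Nat.lt_or_ge (p' : ℕ) s with h' | h'
                · omega
                · exact absurd (hSs.2 p' q' hpq' h') (not_lt.2 hlt')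
              have hpp : p = p' := Fin.ext (by omega)
              have hqq' : q = q' := Fin.ext (by omega)
              rw [hpp, hqq'] at hca
              exact absurd hca.2 (not_lt.2 hlt')
    have hsub : ({s, s + 1} : Finset ℕ) ⊆ Finset.range (n + 1) := by
      intro x hx
      simp only [Finset.mem_insert, Finset.mem_singleton] at hx
      rw [Finset.mem_range]
      omega
    rw [← Finset.sum_subset hsub]
    · rw [Finset.sum_pair (by omega : s ≠ s + 1)]
      rw [if_pos ((hB s (by omega)).2 (Or.inl rfl)),
        if_pos ((hB (s+1) (by omega)).2 (Or.inr rfl))]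
      ring
    · intro x hx hxs
      simp only [Finset.mem_insert, Finset.mem_singleton] at hxs
      push_neg at hxs
      rw [Finset.mem_range] at hx
      rw [if_neg, mul_zero]
      intro hBx
      rcases (hB x (by omega)).1 hBx with h | h
      · exact hxs.1 h
      · exact hxs.2 h
  · refine Finset.sum_eq_zero fun j _ => ?_
    rw [if_neg, mul_zero]
    rintro ⟨h1, h2, h3⟩
    have : s ≤ j := by
      by_contra hc
      exact hmin j (by omega) ⟨h1, h2⟩
    exact hP (noCABelow_anti this h3)


lemma qInt_ne_zero (k : ℕ) : qInt (k + 1) ≠ 0 := by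
  intro h0
  have h1 : (qInt (k + 1)).eval 1 = ((k : ℚ) + 1) := by
    simp [qInt, Polynomial.eval_finset_sum]
  rw [h0] at h1
  simp at h1
  exact absurd h1.symm (by positivity)

lemma qFact_ne_zero (m : ℕ) : qFact m ≠ 0 :=
  Finset.prod_ne_zero_iff.2 fun j _ => qInt_ne_zero j

lemma K_ratfunc (h : i ≤ n) :
    algebraMap (Polynomial ℚ) (RatFunc ℚ) (K h) = qBinom n i := by
  rw [qBinom, eq_div_iff (mul_ne_zero (RatFunc.algebraMap_ne_zero (qFact_ne_zero i))
    (RatFunc.algebraMap_ne_zero (qFact_ne_zero (n - i))))]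
  rw [← map_mul, ← map_mul]
  congr 1
  have := P_decomp h
  rw [P_eq_qFact, P_eq_qFact, P_eq_qFact] at this
  rw [this]
  ring

lemma G_ratfunc (h : i ≤ n) :
    algebraMap (Polynomial ℚ) (RatFunc ℚ) (G n i) =
      qBinom n i ^ 2 * algebraMap (Polynomial ℚ) (RatFunc ℚ) (W i) := by
  rw [G_eq h, map_mul, map_pow, K_ratfunc h]


end Wrec

/-- the recursion `W_n(q) = -∑_{i=0}^{n-1} (-1)^{n-i} [n choose i]_q^2 W_i(q)`. -/
theorem W_recursion (n : ℕ) (hn : 1 ≤ n) :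
    algebraMap (Polynomial ℚ) (RatFunc ℚ) (W n) =
      -∑ i ∈ Finset.range n,
        (-1 : RatFunc ℚ) ^ (n - i) * qBinom n i ^ 2 *
          algebraMap (Polynomial ℚ) (RatFunc ℚ) (W i) := by
  have hinv := congrArg (algebraMap (Polynomial ℚ) (RatFunc ℚ)) (Wrec.involution hn)
  rw [map_sum, map_zero] at hinv
  have hterm : ∀ j, algebraMap (Polynomial ℚ) (RatFunc ℚ) ((-1 : Polynomial ℚ) ^ j * Wrec.G n j)
      = (-1 : RatFunc ℚ) ^ j * algebraMap (Polynomial ℚ) (RatFunc ℚ) (Wrec.G n j) := by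
    intro j
    rw [map_mul, map_pow, map_neg, map_one]
  simp only [hterm] at hinv
  rw [Finset.sum_range_succ] at hinv
  have htop : algebraMap (Polynomial ℚ) (RatFunc ℚ) (Wrec.G n n) =
      algebraMap (Polynomial ℚ) (RatFunc ℚ) (W n) := by rw [Wrec.G_top]
  rw [htop] at hinv
  have key : algebraMap (Polynomial ℚ) (RatFunc ℚ) (W n) =
      -∑ j ∈ Finset.range n, (-1 : RatFunc ℚ) ^ n * ((-1 : RatFunc ℚ) ^ j *
        algebraMap (Polynomial ℚ) (RatFunc ℚ) (Wrec.G n j)) := by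
    have h1 : (-1 : RatFunc ℚ) ^ n * ((-1 : RatFunc ℚ) ^ n *
        algebraMap (Polynomial ℚ) (RatFunc ℚ) (W n)) =
        algebraMap (Polynomial ℚ) (RatFunc ℚ) (W n) := by
      rw [← mul_assoc, ← pow_add]
      have : (-1 : RatFunc ℚ) ^ (n + n) = 1 := by
        rw [show n + n = 2 * n by ring, pow_mul]
        norm_num
      rw [this, one_mul]
    calc algebraMap (Polynomial ℚ) (RatFunc ℚ) (W n)
        = (-1 : RatFunc ℚ) ^ n * ((-1 : RatFunc ℚ) ^ n *
          algebraMap (Polynomial ℚ) (RatFunc ℚ) (W n)) := h1.symm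
      _ = (-1 : RatFunc ℚ) ^ n * (-(∑ j ∈ Finset.range n, (-1 : RatFunc ℚ) ^ j *
          algebraMap (Polynomial ℚ) (RatFunc ℚ) (Wrec.G n j))) := by
          rw [eq_neg_of_add_eq_zero_right hinv]
      _ = -∑ j ∈ Finset.range n, (-1 : RatFunc ℚ) ^ n * ((-1 : RatFunc ℚ) ^ j *
          algebraMap (Polynomial ℚ) (RatFunc ℚ) (Wrec.G n j)) := by
          rw [mul_neg, Finset.mul_sum]
  rw [key]
  congr 1
  refine Finset.sum_congr rfl fun j hj => ?_
  rw [Finset.mem_range] at hj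
  rw [Wrec.G_ratfunc (le_of_lt hj)]
  have hsign : (-1 : RatFunc ℚ) ^ n * (-1 : RatFunc ℚ) ^ j = (-1 : RatFunc ℚ) ^ (n - j) := by
    rw [← pow_add, show n + j = (n - j) + 2 * j by omega, pow_add, pow_mul]
    norm_num
  rw [← mul_assoc, hsign, mul_assoc, ← mul_assoc]
end

section
/- Let q be a prime power and label each covering edge X ⋖ Y of the subspace lattice B_n(q) by the unique element of f(A(Y)) \ f(A(X)), where f(A(Z)) is the set of rightmost-nonzero-coordinate indices occurring among nonzero vectors of Z. Then in every closed interval [X, Y] of B_n(q) there is exactly one maximal chain whose sequence of labels is strictly increasing. -/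
/-- `i` is the index of the rightmost nonzero coordinate of the vector `x`. -/
def RightmostIdx {F : Type*} [Field F] {n : ℕ} (x : Fin n → F) (i : Fin n) : Prop :=
  x i ≠ 0 ∧ ∀ j : Fin n, i < j → x j = 0

/-- `f(A(X))`: the set of indices arising as the rightmost nonzero coordinate of some
nonzero vector of the subspace `X` (equivalently, of a basis vector of a line in `X`). -/
def fSet {F : Type*} [Field F] {n : ℕ} (X : Submodule F (Fin n → F)) : Set (Fin n) :=
  {i | ∃ x ∈ X, RightmostIdx x i}

/-!
Filtering a subspace `Z` by the subspaces `vanishingFrom F n m` of vectors supported on the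
first `m` coordinates, the dimension jumps (by one) exactly at the indices of `fSet Z`; hence
`#fSet Z = dim Z`, which is what makes the edge labels well defined. Along a maximal chain from
`X` to `Y`, `fSet` grows by one label per step, so the labels are exactly `fSet Y \ fSet X`,
and an increasing labelling lists this set in order. The `i`-th member `W` of such a chain is
then forced to be `X ⊔ (Y ⊓ vanishingFrom F n m)` with `m` one past the `i`-th label: `W` lies
below it because `fSet W ⊆ fSet X ∪ {t < m}` (a dimension count in `W ⊔ vanishingFrom F n m`),
and both have the same `fSet`, hence the same dimension. Conversely these subspaces do form a
maximal chain with increasing labels.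
-/

open Module

section

variable {F : Type*} [Field F] {n : ℕ}

variable (F n) in
def vanishingFrom (m : ℕ) : Submodule F (Fin n → F) where
  carrier := {x | ∀ j : Fin n, m ≤ (j : ℕ) → x j = 0}
  add_mem' ha hb j hj := by simp [ha j hj, hb j hj]
  zero_mem' _ _ := rfl
  smul_mem' c _ ha j hj := by simp [ha j hj]

lemma mem_vanishingFrom {m : ℕ} {x : Fin n → F} :
    x ∈ vanishingFrom F n m ↔ ∀ j : Fin n, m ≤ (j : ℕ) → x j = 0 :=
  Iff.rfl

lemma vanishingFrom_mono : Monotone (vanishingFrom F n) :=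
  fun _ _ h _ hx j hj => hx j (h.trans hj)

@[simp] lemma vanishingFrom_zero : vanishingFrom F n 0 = ⊥ := by
  ext x
  simp [mem_vanishingFrom, funext_iff]

lemma vanishingFrom_self : vanishingFrom F n n = ⊤ :=
  eq_top_iff.2 fun _ _ j hj => absurd j.isLt (by omega)

lemma RightmostIdx.mem_vanishingFrom {x : Fin n → F} {t : Fin n} (hx : RightmostIdx x t)
    {m : ℕ} (ht : (t : ℕ) < m) : x ∈ vanishingFrom F n m :=
  fun j hj => hx.2 j (by rw [Fin.lt_def]; omega)

lemma rightmostIdx_single (t : Fin n) : RightmostIdx (Pi.single t (1 : F)) t :=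
  ⟨by simp, fun _ hj => Pi.single_eq_of_ne hj.ne' _⟩

lemma fSet_mono : Monotone (fSet : Submodule F (Fin n → F) → Set (Fin n)) :=
  fun _ _ h _ ⟨x, hx, hr⟩ => ⟨x, h hx, hr⟩

lemma fSet_inf_vanishingFrom (Z : Submodule F (Fin n → F)) (m : ℕ) :
    fSet (Z ⊓ vanishingFrom F n m) = fSet Z ∩ {t | (t : ℕ) < m} := by
  ext t
  refine ⟨fun ⟨x, ⟨hxZ, hxU⟩, hx⟩ => ⟨⟨x, hxZ, hx⟩, ?_⟩,
    fun ⟨⟨x, hxZ, hx⟩, ht⟩ => ⟨x, ⟨hxZ, hx.mem_vanishingFrom ht⟩, hx⟩⟩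
  by_contra ht
  exact hx.1 (hxU t (not_lt.1 ht))

lemma fSet_sup_vanishingFrom (Z : Submodule F (Fin n → F)) (m : ℕ) :
    fSet (Z ⊔ vanishingFrom F n m) = fSet Z ∪ {t | (t : ℕ) < m} := by
  ext t
  refine ⟨fun ⟨x, hx, hxt⟩ => ?_, ?_⟩
  · by_cases ht : (t : ℕ) < m
    · exact Or.inr ht
    obtain ⟨z, hz, u, hu, rfl⟩ := Submodule.mem_sup.1 hx
    -- `u` vanishes on every coordinate that decides the rightmost index `t`
    have hzu : ∀ j : Fin n, t ≤ j → z j = (z + u) j := fun j hj => by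
      simp [hu j (le_trans (not_lt.1 ht) hj)]
    exact Or.inl ⟨z, hz, by rw [hzu t le_rfl]; exact hxt.1,
      fun j hj => by rw [hzu j hj.le]; exact hxt.2 j hj⟩
  · rintro (ht | ht)
    · exact fSet_mono le_sup_left ht
    · exact ⟨_, Submodule.mem_sup_right ((rightmostIdx_single t).mem_vanishingFrom ht),
        rightmostIdx_single t⟩

section rank

variable (Z : Submodule F (Fin n → F)) {m : ℕ} (hm : m < n)

lemma mem_inf_vanishingFrom_of_apply_eq_zero {w : Fin n → F}
    (hw : w ∈ Z ⊓ vanishingFrom F n (m + 1)) (hwm : w ⟨m, hm⟩ = 0) :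
    w ∈ Z ⊓ vanishingFrom F n m :=
  ⟨hw.1, fun j hj => (eq_or_lt_of_le hj).elim (fun h => (Fin.ext h.symm : j = ⟨m, hm⟩) ▸ hwm)
    fun h => hw.2 j h⟩

lemma finrank_inf_vanishingFrom_succ_of_mem (hmZ : ⟨m, hm⟩ ∈ fSet Z) :
    finrank F ↥(Z ⊓ vanishingFrom F n (m + 1)) = finrank F ↥(Z ⊓ vanishingFrom F n m) + 1 := by
  set W := Z ⊓ vanishingFrom F n (m + 1)
  obtain ⟨x, hxZ, hx⟩ := hmZ
  let φ : Dual F W := (LinearMap.proj ⟨m, hm⟩).domRestrict W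
  have hxW : x ∈ W := ⟨hxZ, hx.mem_vanishingFrom (Nat.lt_succ_self m)⟩
  have hφ : φ ≠ 0 := fun h => hx.1 (LinearMap.congr_fun h ⟨x, hxW⟩)
  have hker : LinearMap.ker φ = (Z ⊓ vanishingFrom F n m).comap W.subtype := by
    ext w
    exact ⟨mem_inf_vanishingFrom_of_apply_eq_zero Z hm w.2, fun hw => hw.2 _ le_rfl⟩
  rw [← Dual.finrank_ker_add_one_of_ne_zero hφ, hker,
    (Submodule.comapSubtypeEquivOfLe
      (inf_le_inf_left Z (vanishingFrom_mono (Nat.le_succ m)))).finrank_eq]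

lemma inf_vanishingFrom_succ_of_notMem (hmZ : ⟨m, hm⟩ ∉ fSet Z) :
    Z ⊓ vanishingFrom F n (m + 1) = Z ⊓ vanishingFrom F n m :=
  le_antisymm
    (fun w hw => mem_inf_vanishingFrom_of_apply_eq_zero Z hm hw <| by_contra fun hwm =>
      hmZ ⟨w, hw.1, hwm, fun j hj => hw.2 j (Fin.lt_def.1 hj)⟩)
    (inf_le_inf_left Z (vanishingFrom_mono (Nat.le_succ m)))

end rank

lemma finrank_inf_vanishingFrom (Z : Submodule F (Fin n → F)) {m : ℕ} (hm : m ≤ n) :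
    finrank F ↥(Z ⊓ vanishingFrom F n m) = (fSet Z ∩ {t | (t : ℕ) < m}).ncard := by
  induction m with
  | zero => simp
  | succ m ih =>
    set i : Fin n := ⟨m, hm⟩
    have hsplit : {t : Fin n | (t : ℕ) < m + 1} = {t : Fin n | (t : ℕ) < m} ∪ {i} := by
      ext t
      simp only [Set.mem_ofPred_eq, Set.mem_union, Set.mem_singleton_iff, Fin.ext_iff, i]
      omega
    by_cases hmZ : i ∈ fSet Z
    · rw [finrank_inf_vanishingFrom_succ_of_mem Z hm hmZ, ih (by omega), hsplit,
        Set.inter_union_distrib_left, Set.inter_singleton_of_mem hmZ, Set.union_singleton,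
        Set.ncard_insert_of_notMem (by simp [i])]
    · rw [inf_vanishingFrom_succ_of_notMem Z hm hmZ, ih (by omega), hsplit,
        Set.inter_union_distrib_left, Set.inter_singleton_eq_empty.2 hmZ, Set.union_empty]

lemma ncard_fSet (Z : Submodule F (Fin n → F)) : (fSet Z).ncard = finrank F Z := by
  have h := finrank_inf_vanishingFrom Z le_rfl
  rw [vanishingFrom_self, inf_top_eq] at h
  rw [h]
  congr
  ext t
  simp

lemma eq_of_le_of_fSet_subset {W V : Submodule F (Fin n → F)} (hle : W ≤ V)
    (hf : fSet V ⊆ fSet W) : W = V :=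
  Submodule.eq_of_le_of_finrank_le hle <| by
    rw [← ncard_fSet, ← ncard_fSet]
    exact Set.ncard_le_ncard hf

lemma le_sup_vanishingFrom_of_fSet_subset {X V : Submodule F (Fin n → F)} (hXV : X ≤ V) {m : ℕ}
    (hf : fSet V ⊆ fSet X ∪ {t | (t : ℕ) < m}) : V ≤ X ⊔ vanishingFrom F n m := by
  have h : X ⊔ vanishingFrom F n m = V ⊔ vanishingFrom F n m :=
    eq_of_le_of_fSet_subset (sup_le_sup_right hXV _) <| by
      rw [fSet_sup_vanishingFrom, fSet_sup_vanishingFrom]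
      exact Set.union_subset hf Set.subset_union_right
  exact h ▸ le_sup_left

lemma fSet_sup_inf_vanishingFrom {X Y : Submodule F (Fin n → F)} (hXY : X ≤ Y) (m : ℕ) :
    fSet (X ⊔ (Y ⊓ vanishingFrom F n m)) = fSet X ∪ (fSet Y ∩ {t | (t : ℕ) < m}) := by
  refine Set.Subset.antisymm (fun t ht => ?_) <| Set.union_subset (fSet_mono le_sup_left)
    (fSet_inf_vanishingFrom Y m ▸ fSet_mono le_sup_right)
  have hY : t ∈ fSet Y := fSet_mono (sup_le hXY inf_le_left) ht
  have hXU : t ∈ fSet (X ⊔ vanishingFrom F n m) :=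
    fSet_mono (sup_le_sup_left inf_le_right X) ht
  rw [fSet_sup_vanishingFrom] at hXU
  exact hXU.imp_right fun h => ⟨hY, h⟩

lemma eq_sup_inf_vanishingFrom_of_fSet_eq {X Y W : Submodule F (Fin n → F)} (hXW : X ≤ W)
    (hWY : W ≤ Y) {m : ℕ} (hW : fSet W = fSet X ∪ (fSet Y ∩ {t | (t : ℕ) < m})) :
    W = X ⊔ (Y ⊓ vanishingFrom F n m) := by
  have hXY := hXW.trans hWY
  refine eq_of_le_of_fSet_subset ?_ (by rw [fSet_sup_inf_vanishingFrom hXY, hW])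
  rw [inf_comm, ← sup_inf_assoc_of_le _ hXY]
  exact le_inf (le_sup_vanishingFrom_of_fSet_subset hXW
    (hW ▸ Set.union_subset_union_right _ Set.inter_subset_right)) hWY

lemma fSet_eq_insert_of_finrank_eq_succ {W W' : Submodule F (Fin n → F)} (hle : W ≤ W')
    (hrank : finrank F W' = finrank F W + 1) {t : Fin n} (ht' : t ∈ fSet W') (ht : t ∉ fSet W) :
    fSet W' = insert t (fSet W) :=
  (Set.eq_of_subset_of_ncard_le (Set.insert_subset ht' (fSet_mono hle)) (by
    rw [Set.ncard_insert_of_notMem ht, ncard_fSet, ncard_fSet, hrank])).symm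

lemma Fin.image_setOf_castSucc_lt_succ {α : Type*} {k : ℕ} (ℓ : Fin k → α) (i : Fin k) :
    ℓ '' {j | j.castSucc < i.succ} = insert (ℓ i) (ℓ '' {j | j.castSucc < i.castSucc}) := by
  rw [← Set.image_insert_eq]
  congr 1
  ext j
  simp [le_iff_eq_or_lt]

section chain

variable {k : ℕ}

def labelCutoff (ℓ : Fin k → Fin n) (i : Fin (k + 1)) : ℕ :=
  (Finset.univ.filter fun j : Fin k => j.castSucc < i).sup fun j => (ℓ j : ℕ) + 1

lemma labelCutoff_zero (ℓ : Fin k → Fin n) : labelCutoff ℓ 0 = 0 := by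
  simp [labelCutoff]

lemma labelCutoff_mono (ℓ : Fin k → Fin n) : Monotone (labelCutoff ℓ) := fun _ _ h =>
  Finset.sup_mono fun j => by simpa using fun hj : j.castSucc < _ => hj.trans_le h

lemma lt_labelCutoff_iff {ℓ : Fin k → Fin n} (hℓ : StrictMono ℓ) (j : Fin k) (i : Fin (k + 1)) :
    (ℓ j : ℕ) < labelCutoff ℓ i ↔ j.castSucc < i := by
  simp only [labelCutoff, Finset.lt_sup_iff, Finset.mem_filter, Finset.mem_univ, true_and,
    Nat.lt_succ_iff, ← Fin.le_def, hℓ.le_iff_le]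
  exact ⟨fun ⟨j', hj', hle⟩ => lt_of_le_of_lt (Fin.castSucc_le_castSucc_iff.2 hle) hj',
    fun h => ⟨j, h, le_rfl⟩⟩

def canonicalChain (X Y : Submodule F (Fin n → F)) (ℓ : Fin k → Fin n) (i : Fin (k + 1)) :
    Submodule F (Fin n → F) :=
  X ⊔ (Y ⊓ vanishingFrom F n (labelCutoff ℓ i))

def IsIncreasingMaximalChain (X Y : Submodule F (Fin n → F))
    (c : Fin (k + 1) → Submodule F (Fin n → F)) (ℓ : Fin k → Fin n) : Prop :=
  c 0 = X ∧ c (Fin.last k) = Y ∧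
    (∀ i : Fin k, c i.castSucc < c i.succ ∧ finrank F (c i.succ) = finrank F (c i.castSucc) + 1) ∧
    StrictMono ℓ ∧ ∀ i, ℓ i ∈ fSet (c i.succ) ∧ ℓ i ∉ fSet (c i.castSucc)

variable {X Y : Submodule F (Fin n → F)} {ℓ : Fin k → Fin n}

lemma fSet_canonicalChain (hXY : X ≤ Y) (hℓ : StrictMono ℓ)
    (hrange : Set.range ℓ = fSet Y \ fSet X) (i : Fin (k + 1)) :
    fSet (canonicalChain X Y ℓ i) = fSet X ∪ ℓ '' {j | j.castSucc < i} := by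
  rw [canonicalChain, fSet_sup_inf_vanishingFrom hXY]
  ext t
  by_cases hX : t ∈ fSet X
  · simp [hX]
  have hY : t ∈ fSet Y ↔ t ∈ Set.range ℓ := by simp [hrange, hX]
  simp only [Set.mem_union, hX, false_or, Set.mem_inter_iff, hY, Set.mem_ofPred_eq,
    Set.mem_image]
  constructor
  · rintro ⟨⟨j, rfl⟩, hj⟩
    exact ⟨j, (lt_labelCutoff_iff hℓ j i).1 hj, rfl⟩
  · rintro ⟨j, hj, rfl⟩
    exact ⟨⟨j, rfl⟩, (lt_labelCutoff_iff hℓ j i).2 hj⟩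

lemma isIncreasingMaximalChain_canonicalChain (hXY : X ≤ Y) (hℓ : StrictMono ℓ)
    (hrange : Set.range ℓ = fSet Y \ fSet X) :
    IsIncreasingMaximalChain X Y (canonicalChain X Y ℓ) ℓ := by
  set c := canonicalChain X Y ℓ
  have hf := fSet_canonicalChain hXY hℓ hrange
  have hinsert : ∀ i, fSet (c i.succ) = insert (ℓ i) (fSet (c i.castSucc)) := fun i => by
    rw [hf, hf, Fin.image_setOf_castSucc_lt_succ, Set.union_insert]
  have hnew : ∀ i, ℓ i ∉ fSet (c i.castSucc) := fun i => by
    rw [hf]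
    rintro (hX | ⟨j, hj, hji⟩)
    · exact (hrange ▸ Set.mem_range_self i : ℓ i ∈ fSet Y \ fSet X).2 hX
    · obtain rfl := hℓ.injective hji
      exact lt_irrefl j.castSucc hj
  have hrank : ∀ i : Fin k, finrank F (c i.succ) = finrank F (c i.castSucc) + 1 := fun i => by
    rw [← ncard_fSet, ← ncard_fSet, hinsert, Set.ncard_insert_of_notMem (hnew i)]
  have hlast : c (Fin.last k) = Y := by
    refine eq_of_le_of_fSet_subset (sup_le hXY inf_le_left) fun t hY => ?_
    rw [hf]
    by_cases hX : t ∈ fSet X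
    · exact Or.inl hX
    obtain ⟨j, rfl⟩ : t ∈ Set.range ℓ := hrange ▸ ⟨hY, hX⟩
    exact Or.inr ⟨j, Fin.castSucc_lt_last j, rfl⟩
  refine ⟨by simp [c, canonicalChain, labelCutoff_zero], hlast, fun i => ⟨?_, hrank i⟩, hℓ,
    fun i => ⟨hinsert i ▸ Set.mem_insert _ _, hnew i⟩⟩
  refine lt_of_le_of_ne (sup_le_sup_left (inf_le_inf_left Y
    (vanishingFrom_mono (labelCutoff_mono ℓ (Fin.castSucc_le_succ i)))) X) fun h => ?_
  have := hrank i
  rw [h] at this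
  omega

variable {c : Fin (k + 1) → Submodule F (Fin n → F)}

lemma fSet_chain
    (hstep : ∀ i : Fin k, c i.castSucc < c i.succ ∧
      finrank F (c i.succ) = finrank F (c i.castSucc) + 1)
    (hlabel : ∀ i, ℓ i ∈ fSet (c i.succ) ∧ ℓ i ∉ fSet (c i.castSucc)) (i : Fin (k + 1)) :
    fSet (c i) = fSet (c 0) ∪ ℓ '' {j | j.castSucc < i} := by
  induction i using Fin.induction with
  | zero => simp
  | succ i ih =>
    rw [fSet_eq_insert_of_finrank_eq_succ (hstep i).1.le (hstep i).2 (hlabel i).1 (hlabel i).2,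
      ih, Fin.image_setOf_castSucc_lt_succ, Set.union_insert]

lemma IsIncreasingMaximalChain.range_eq_and_eq_canonicalChain
    (h : IsIncreasingMaximalChain X Y c ℓ) :
    Set.range ℓ = fSet Y \ fSet X ∧ c = canonicalChain X Y ℓ := by
  obtain ⟨h0, hlast, hstep, hℓ, hlabel⟩ := h
  have hf := fSet_chain hstep hlabel
  rw [h0] at hf
  have hmono : Monotone c := Fin.monotone_iff_le_succ.2 fun i => (hstep i).1.le
  have hXY : X ≤ Y := h0 ▸ hlast ▸ hmono (Fin.zero_le _)
  have hrange : Set.range ℓ = fSet Y \ fSet X := by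
    ext t
    rw [← hlast, hf]
    constructor
    · rintro ⟨j, rfl⟩
      exact ⟨Or.inr ⟨j, Fin.castSucc_lt_last j, rfl⟩,
        fun hX => (hlabel j).2 (hf _ ▸ Or.inl hX)⟩
    · rintro ⟨hY, hX⟩
      obtain ⟨j, -, rfl⟩ := hY.resolve_left hX
      exact ⟨j, rfl⟩
  refine ⟨hrange, funext fun i => eq_sup_inf_vanishingFrom_of_fSet_eq
    (h0 ▸ hmono (Fin.zero_le i)) (hlast ▸ hmono (Fin.le_last i)) ?_⟩
  rw [hf, ← fSet_canonicalChain hXY hℓ hrange]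
  exact fSet_sup_inf_vanishingFrom hXY _

end chain

end

theorem unique_increasing_maximal_chain_general (F : Type*) [Field F] (n : ℕ)
    (X Y : Submodule F (Fin n → F)) (hXY : X ≤ Y) :
    ∃! c : Fin (Module.finrank F Y - Module.finrank F X + 1) → Submodule F (Fin n → F),
      c 0 = X ∧ c (Fin.last _) = Y ∧
      (∀ i : Fin (Module.finrank F Y - Module.finrank F X),
        c i.castSucc < c i.succ ∧
          Module.finrank F (c i.succ) = Module.finrank F (c i.castSucc) + 1) ∧
      ∃ ℓ : Fin (Module.finrank F Y - Module.finrank F X) → Fin n, StrictMono ℓ ∧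
        ∀ i, ℓ i ∈ fSet (c i.succ) ∧ ℓ i ∉ fSet (c i.castSucc) := by
  set S := (Set.toFinite (fSet Y \ fSet X)).toFinset
  have hS : S.card = finrank F Y - finrank F X := by
    rw [← Set.ncard_eq_toFinset_card, Set.ncard_sdiff (fSet_mono hXY), ncard_fSet, ncard_fSet]
  set ℓ := S.orderEmbOfFin hS
  have hrange : Set.range ℓ = fSet Y \ fSet X := by
    rw [Finset.range_orderEmbOfFin, Set.Finite.coe_toFinset]
  obtain ⟨h0, hlast, hstep, hℓ, hlabel⟩ :=
    isIncreasingMaximalChain_canonicalChain hXY ℓ.strictMono hrange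
  refine ⟨canonicalChain X Y ℓ, ⟨h0, hlast, hstep, ℓ, hℓ, hlabel⟩, ?_⟩
  rintro c ⟨h0', hlast', hstep', ℓ', hℓ', hlabel'⟩
  obtain ⟨hrange', rfl⟩ :=
    IsIncreasingMaximalChain.range_eq_and_eq_canonicalChain ⟨h0', hlast', hstep', hℓ', hlabel'⟩
  rw [(hℓ'.range_inj ℓ.strictMono).1 (hrange'.trans hrange.symm)]

/-- in every closed interval `[X, Y]` of the subspace lattice `B_n(q)`,
there is exactly one maximal chain whose sequence of edge labels (the label of a
covering edge `W ⋖ W'` being the unique element of `f(A(W')) \ f(A(W))`) is strictly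
increasing. -/
theorem unique_increasing_maximal_chain (F : Type*) [Field F] [Fintype F] (n : ℕ)
    (X Y : Submodule F (Fin n → F)) (hXY : X ≤ Y) :
    ∃! c : Fin (Module.finrank F Y - Module.finrank F X + 1) → Submodule F (Fin n → F),
      c 0 = X ∧ c (Fin.last _) = Y ∧
      (∀ i : Fin (Module.finrank F Y - Module.finrank F X),
        c i.castSucc < c i.succ ∧
          Module.finrank F (c i.succ) = Module.finrank F (c i.castSucc) + 1) ∧
      ∃ ℓ : Fin (Module.finrank F Y - Module.finrank F X) → Fin n, StrictMono ℓ ∧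
        ∀ i, ℓ i ∈ fSet (c i.succ) ∧ ℓ i ∉ fSet (c i.castSucc) :=
  unique_increasing_maximal_chain_general F n X Y hXY
end

section
/- With the edge labeling of B_n(q) by rightmost-nonzero-coordinate indices, for every σ ∈ S_n the number of maximal chains of B_n(q) (from 0 to F_q^n) whose label sequence is σ(1), σ(2), ..., σ(n) equals q^{inv(σ)}. -/
/-!
A maximal chain with label sequence `σ` is the flag of row spans of a unique `σ`-echelon matrix:
row `k` has a `1` in column `σ k`, zeros to the right of it, and zeros in the pivot columns
`σ l` of the earlier rows `l < k`. The entries `M k (σ l)` that remain free are exactly those with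
`k < l` and `σ l < σ k`, i.e. one for each inversion of `σ`.

Both directions rest on one observation: a nontrivial combination of vectors with distinct
rightmost indices has as rightmost index the largest one that occurs.
-/

open Module

section RightmostIdx

variable {F : Type*} [Field F] {n : ℕ}

theorem RightmostIdx.unique {x : Fin n → F} {i j : Fin n}
    (hi : RightmostIdx x i) (hj : RightmostIdx x j) : i = j := by
  rcases lt_trichotomy i j with h | h | h
  · exact absurd (hi.2 j h) hj.1
  · exact h
  · exact absurd (hj.2 i h) hi.1

theorem exists_rightmostIdx {x : Fin n → F} (hx : x ≠ 0) : ∃ i, RightmostIdx x i := by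
  classical
  set s := Finset.univ.filter fun i => x i ≠ 0
  have hs : s.Nonempty := by
    obtain ⟨i, hi⟩ := Function.ne_iff.mp hx
    exact ⟨i, by simpa [s] using hi⟩
  refine ⟨s.max' hs, by simpa [s] using s.max'_mem hs, fun j hj => ?_⟩
  by_contra hxj
  exact (s.le_max' j (by simpa [s] using hxj)).not_gt hj

theorem exists_rightmostIdx_linearCombination {ι : Type*} {v : ι → Fin n → F} {r : ι → Fin n}
    (hr : ∀ i, RightmostIdx (v i) (r i)) (hr_inj : Function.Injective r) {a : ι →₀ F}
    (ha : a ≠ 0) : ∃ i ∈ a.support, RightmostIdx (Finsupp.linearCombination F v a) (r i) := by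
  obtain ⟨i₀, hi₀, hmax⟩ := a.support.exists_max_image r (Finsupp.support_nonempty_iff.mpr ha)
  have happly (j : Fin n) :
      Finsupp.linearCombination F v a j = ∑ i ∈ a.support, a i * v i j := by
    simp [Finsupp.linearCombination_apply, Finsupp.sum, Finset.sum_apply]
  refine ⟨i₀, hi₀, ?_, fun j hj => ?_⟩
  · rw [happly, Finset.sum_eq_single i₀ (fun i hi hne => ?_) (fun h => absurd hi₀ h)]
    · exact mul_ne_zero (Finsupp.mem_support_iff.1 hi₀) (hr i₀).1
    · rw [(hr i).2 _ ((hmax i hi).lt_of_ne (hr_inj.ne hne)), mul_zero]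
  · rw [happly]
    exact Finset.sum_eq_zero fun i hi => by rw [(hr i).2 _ ((hmax i hi).trans_lt hj), mul_zero]

theorem linearIndependent_of_rightmostIdx {ι : Type*} {v : ι → Fin n → F} {r : ι → Fin n}
    (hr : ∀ i, RightmostIdx (v i) (r i)) (hr_inj : Function.Injective r) :
    LinearIndependent F v := by
  rw [linearIndependent_iff]
  intro a ha
  by_contra hne
  obtain ⟨i, -, hi⟩ := exists_rightmostIdx_linearCombination hr hr_inj hne
  rw [ha] at hi
  exact hi.1 rfl

theorem fSet_span_image_subset {ι : Type*} {v : ι → Fin n → F} {r : ι → Fin n}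
    (hr : ∀ i, RightmostIdx (v i) (r i)) (hr_inj : Function.Injective r) (s : Set ι) :
    fSet (Submodule.span F (v '' s)) ⊆ r '' s := by
  rintro j ⟨x, hx, hj⟩
  obtain ⟨a, has, rfl⟩ := (Finsupp.mem_span_image_iff_linearCombination F).mp hx
  have ha : a ≠ 0 := by
    rintro rfl
    exact hj.1 (by simp)
  obtain ⟨i, hi, hri⟩ := exists_rightmostIdx_linearCombination hr hr_inj ha
  exact ⟨i, has hi, (hj.unique hri).symm⟩

theorem fSet_mono_s10 {X Y : Submodule F (Fin n → F)} (h : X ≤ Y) : fSet X ⊆ fSet Y :=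
  fun _ ⟨x, hx, hr⟩ => ⟨x, h hx, hr⟩

theorem eq_zero_of_fSet_subset {V : Submodule F (Fin n → F)} {s : Set (Fin n)}
    (hs : fSet V ⊆ s) {x : Fin n → F} (hx : x ∈ V) (h0 : ∀ j ∈ s, x j = 0) : x = 0 := by
  by_contra hne
  obtain ⟨j, hj⟩ := exists_rightmostIdx hne
  exact hj.1 (h0 j (hs ⟨x, hx, hj⟩))

/-- Restriction to the coordinates in `s` is injective on `V`, hence an isomorphism by dimension
count; take the preimage of the `i`-th unit vector. -/
theorem exists_mem_rightmostIdx_of_fSet_subset {V : Submodule F (Fin n → F)}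
    {s : Finset (Fin n)} (hs : fSet V ⊆ s) (hdim : s.card ≤ finrank F V) {i : Fin n}
    (hi : i ∈ s) : ∃ x ∈ V, RightmostIdx x i ∧ x i = 1 ∧ ∀ j ∈ s, j ≠ i → x j = 0 := by
  classical
  let restrict : V →ₗ[F] (s → F) := (LinearMap.funLeft F F ((↑) : s → Fin n)).comp V.subtype
  have h_inj : Function.Injective restrict := by
    rw [← LinearMap.ker_eq_bot, Submodule.eq_bot_iff]
    intro x hx
    exact Subtype.ext (eq_zero_of_fSet_subset hs x.2 fun j hj => congrFun hx ⟨j, hj⟩)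
  have h_surj : Function.Surjective restrict := by
    refine (LinearMap.injective_iff_surjective_of_finrank_eq_finrank ?_).mp h_inj
    refine le_antisymm (LinearMap.finrank_le_finrank_of_injective h_inj) ?_
    simpa using hdim
  obtain ⟨x, hx⟩ := h_surj (Pi.single ⟨i, hi⟩ 1)
  have hx_apply (j : s) : (x : Fin n → F) j = (Pi.single ⟨i, hi⟩ 1 : s → F) j :=
    congrFun hx j
  have hxi : (x : Fin n → F) i = 1 := by simpa using hx_apply ⟨i, hi⟩
  have hxs : ∀ j ∈ s, j ≠ i → (x : Fin n → F) j = 0 := fun j hj hji => by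
    simpa [Pi.single_apply, hji] using hx_apply ⟨j, hj⟩
  refine ⟨x, x.2, ⟨by simp [hxi], fun j hij => ?_⟩, hxi, hxs⟩
  by_contra hxj
  obtain ⟨k, hk⟩ := exists_rightmostIdx (x := (x : Fin n → F)) fun h => hxj (by simp [h])
  have hik : i < k := hij.trans_le (le_of_not_gt fun hkj => hxj (hk.2 j hkj))
  exact hk.1 (hxs k (hs ⟨x, x.2, hk⟩) hik.ne')

end RightmostIdx

theorem card_subtype_eqOn_compl {α β : Type*} [Finite α] (s : Set α) (g : α → β) :
    Nat.card {f : α → β // Set.EqOn f g sᶜ} = Nat.card β ^ Nat.card s := by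
  classical
  rw [← Nat.card_fun]
  exact Nat.card_congr
    { toFun := fun f a => f.1 a
      invFun := fun h => ⟨fun a => if ha : a ∈ s then h ⟨a, ha⟩ else g a, fun a ha => dif_neg ha⟩
      left_inv := fun f => Subtype.ext <| funext fun a => by
        by_cases ha : a ∈ s
        · simp [ha]
        · simp [ha, f.2 ha]
      right_inv := fun h => funext fun a => by simp }

section Echelon

variable {F : Type*} [Field F] {n : ℕ}

/-- Equivalently: `M k (σ k) = 1`, and row `k` vanishes to the right of column `σ k` and in the
columns `σ l` with `l < k` (see `IsEchelon.of_rows`). -/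
def IsEchelon (σ : Equiv.Perm (Fin n)) (M : Fin n → Fin n → F) : Prop :=
  ∀ k l, ¬(k < l ∧ σ l < σ k) → M k (σ l) = if k = l then 1 else 0

variable {σ : Equiv.Perm (Fin n)} {M : Fin n → Fin n → F}

namespace IsEchelon

theorem apply_self (hM : IsEchelon σ M) (k : Fin n) : M k (σ k) = 1 := by
  simpa using hM k k fun h => h.1.false

theorem apply_of_lt (hM : IsEchelon σ M) {l k : Fin n} (hlk : l < k) : M k (σ l) = 0 := by
  simpa [hlk.ne'] using hM k l fun h => (h.1.trans hlk).false

theorem rightmostIdx (hM : IsEchelon σ M) (k : Fin n) : RightmostIdx (M k) (σ k) := by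
  refine ⟨by simp [hM.apply_self k], fun j hj => ?_⟩
  obtain ⟨l, rfl⟩ := σ.surjective j
  have hkl : k ≠ l := by
    rintro rfl
    exact hj.false
  simpa [hkl] using hM k l fun h => (h.2.trans hj).false

theorem of_rows (h_idx : ∀ k, RightmostIdx (M k) (σ k)) (h_one : ∀ k, M k (σ k) = 1)
    (h_zero : ∀ l k, l < k → M k (σ l) = 0) : IsEchelon σ M := by
  intro k l hkl
  rcases lt_trichotomy k l with hlt | rfl | hgt
  · rw [if_neg hlt.ne]
    exact (h_idx k).2 _ ((not_lt.mp fun h => hkl ⟨hlt, h⟩).lt_of_ne (σ.injective.ne hlt.ne))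
  · simp [h_one]
  · rw [if_neg hgt.ne', h_zero l k hgt]

theorem linearIndependent (hM : IsEchelon σ M) : LinearIndependent F M :=
  linearIndependent_of_rightmostIdx hM.rightmostIdx σ.injective

end IsEchelon

variable (σ) in
theorem card_isEchelon :
    Nat.card {M : Fin n → Fin n → F // IsEchelon σ M} = Nat.card F ^ inversions σ := by
  let e : (Fin n → Fin n → F) ≃ (Fin n × Fin n → F) :=
    (Equiv.piCongrRight fun _ => σ.symm.arrowCongr (Equiv.refl F)).trans (Equiv.curry _ _ _).symm
  let invPairs : Set (Fin n × Fin n) := {p | p.1 < p.2 ∧ σ p.2 < σ p.1}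
  let idMatrix : Fin n × Fin n → F := fun p => if p.1 = p.2 then 1 else 0
  have h_iff (M : Fin n → Fin n → F) : IsEchelon σ M ↔ Set.EqOn (e M) idMatrix invPairsᶜ := by
    simp [IsEchelon, Set.EqOn, e, invPairs, idMatrix]
  rw [Nat.card_congr (e.subtypeEquiv (q := fun f => Set.EqOn f idMatrix invPairsᶜ) h_iff),
    card_subtype_eqOn_compl]
  simp [invPairs, inversions, Nat.card_eq_fintype_card, Fintype.card_subtype]

end Echelon

section Chains

variable {F : Type*} [Field F] {n : ℕ} {σ : Equiv.Perm (Fin n)}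

def IsLabelledChain (σ : Equiv.Perm (Fin n)) (c : Fin (n + 1) → Submodule F (Fin n → F)) :
    Prop :=
  c 0 = ⊥ ∧ c (Fin.last n) = ⊤ ∧
    ∀ i : Fin n, c i.castSucc < c i.succ ∧
      finrank F (c i.succ) = finrank F (c i.castSucc) + 1 ∧
      σ i ∈ fSet (c i.succ) ∧ σ i ∉ fSet (c i.castSucc)

def rowSpan (M : Fin n → Fin n → F) (k : ℕ) : Submodule F (Fin n → F) :=
  Submodule.span F (M '' {l | (l : ℕ) < k})

theorem rowSpan_mono (M : Fin n → Fin n → F) : Monotone (rowSpan M) := fun _ _ hk =>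
  Submodule.span_mono (Set.image_mono fun _ hl => lt_of_lt_of_le hl hk)

theorem row_mem_rowSpan (M : Fin n → Fin n → F) {l : Fin n} {k : ℕ} (hl : (l : ℕ) < k) :
    M l ∈ rowSpan M k :=
  Submodule.subset_span ⟨l, hl, rfl⟩

theorem finrank_rowSpan {M : Fin n → Fin n → F} (hM : LinearIndependent F M) (k : ℕ) :
    finrank F (rowSpan M k) = min n k := by
  classical
  rw [rowSpan, Set.image_eq_range]
  refine (finrank_span_eq_card (b := fun l : {l : Fin n | (l : ℕ) < k} => M l)
    (hM.comp _ Subtype.val_injective)).trans ?_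
  simp [Fintype.card_subtype, Fin.card_filter_val_lt]

namespace IsEchelon

variable {M M' : Fin n → Fin n → F}

theorem isLabelledChain_rowSpan (hM : IsEchelon σ M) :
    IsLabelledChain σ fun k => rowSpan M k := by
  have hrank {k : ℕ} (hk : k ≤ n) : finrank F (rowSpan M k) = k := by
    rw [finrank_rowSpan hM.linearIndependent, min_eq_right hk]
  refine ⟨by simp [rowSpan], ?_, fun i => ⟨?_, ?_, ?_, fun h => ?_⟩⟩
  · exact Submodule.eq_top_of_finrank_eq (by simp [hrank le_rfl])
  · refine Submodule.lt_of_le_of_finrank_lt_finrank (rowSpan_mono M (by simp)) ?_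
    simp [hrank i.is_lt.le, hrank i.is_lt]
  · simp [hrank i.is_lt.le, hrank i.is_lt]
  · exact ⟨M i, row_mem_rowSpan M (by simp), hM.rightmostIdx i⟩
  · obtain ⟨l, hl, hli⟩ := fSet_span_image_subset hM.rightmostIdx σ.injective _ h
    obtain rfl := σ.injective hli
    simp at hl

theorem eq_of_rowSpan_eq (hM : IsEchelon σ M) (hM' : IsEchelon σ M')
    (h : ∀ k : Fin n, rowSpan M (k + 1) = rowSpan M' (k + 1)) : M = M' := by
  funext k
  have hmem : M k - M' k ∈ rowSpan M' (k + 1) :=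
    sub_mem (h k ▸ row_mem_rowSpan M k.val.lt_succ_self) (row_mem_rowSpan M' k.val.lt_succ_self)
  refine sub_eq_zero.mp
    (eq_zero_of_fSet_subset (fSet_span_image_subset hM'.rightmostIdx σ.injective _) hmem ?_)
  rintro _ ⟨l, hl, rfl⟩
  rcases (show l ≤ k from Nat.lt_succ_iff.mp hl).lt_or_eq with hlk | rfl
  · simp [hM.apply_of_lt hlk, hM'.apply_of_lt hlk]
  · simp [hM.apply_self, hM'.apply_self]

end IsEchelon

namespace IsLabelledChain

variable {c : Fin (n + 1) → Submodule F (Fin n → F)}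

theorem strictMono (hc : IsLabelledChain σ c) : StrictMono c :=
  Fin.strictMono_iff_lt_succ.mpr fun i => (hc.2.2 i).1

theorem finrank_eq (hc : IsLabelledChain σ c) (k : Fin (n + 1)) : finrank F (c k) = k := by
  induction k using Fin.induction with
  | zero => simp [hc.1]
  | succ i ih => rw [(hc.2.2 i).2.1, ih, Fin.val_succ, Fin.val_castSucc]

/-- A label `σ m` with `m > k` is new only at step `m`, so it cannot occur before. -/
theorem fSet_succ_subset (hc : IsLabelledChain σ c) (k : Fin n) :
    fSet (c k.succ) ⊆ ((Finset.Iic k).image σ : Set (Fin n)) := by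
  intro j hj
  obtain ⟨m, rfl⟩ := σ.surjective j
  refine Finset.mem_coe.mpr (Finset.mem_image_of_mem σ (Finset.mem_Iic.mpr ?_))
  by_contra! hkm
  exact (hc.2.2 m).2.2.2 (fSet_mono_s10 (hc.strictMono.monotone (Fin.succ_le_castSucc_iff.mpr hkm)) hj)

theorem exists_row (hc : IsLabelledChain σ c) (k : Fin n) :
    ∃ v ∈ c k.succ, RightmostIdx v (σ k) ∧ v (σ k) = 1 ∧ ∀ l < k, v (σ l) = 0 := by
  have hdim : ((Finset.Iic k).image σ).card ≤ finrank F (c k.succ) := by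
    rw [Finset.card_image_of_injective _ σ.injective, Fin.card_Iic, hc.finrank_eq, Fin.val_succ]
  obtain ⟨v, hv, hidx, hone, hzero⟩ := exists_mem_rightmostIdx_of_fSet_subset
    (hc.fSet_succ_subset k) hdim (Finset.mem_image_of_mem σ (Finset.mem_Iic.mpr le_rfl))
  refine ⟨v, hv, hidx, hone, fun l hl => hzero _ ?_ (σ.injective.ne hl.ne)⟩
  exact Finset.mem_image_of_mem σ (Finset.mem_Iic.mpr hl.le)

theorem exists_isEchelon (hc : IsLabelledChain σ c) :
    ∃ M : Fin n → Fin n → F, IsEchelon σ M ∧ (fun k : Fin (n + 1) => rowSpan M k) = c := by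
  choose M hM_mem hM_idx hM_one hM_zero using hc.exists_row
  have hM : IsEchelon σ M := .of_rows hM_idx hM_one fun l k hlk => hM_zero k l hlk
  refine ⟨M, hM, funext fun k => Submodule.eq_of_le_of_finrank_le ?_ ?_⟩
  · refine Submodule.span_le.mpr ?_
    rintro _ ⟨l, hl, rfl⟩
    exact hc.strictMono.monotone (show l.succ ≤ k from hl) (hM_mem l)
  · rw [hc.finrank_eq, finrank_rowSpan hM.linearIndependent, min_eq_right k.is_le]

end IsLabelledChain

variable (σ) in
noncomputable def echelonEquivLabelledChain :
    {M : Fin n → Fin n → F // IsEchelon σ M} ≃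
      {c : Fin (n + 1) → Submodule F (Fin n → F) // IsLabelledChain σ c} :=
  Equiv.ofBijective (fun M => ⟨fun k => rowSpan M.1 k, M.2.isLabelledChain_rowSpan⟩)
    ⟨fun M M' h => Subtype.ext <|
        M.2.eq_of_rowSpan_eq M'.2 fun k => congrFun (congrArg Subtype.val h) k.succ,
      fun c => c.2.exists_isEchelon.elim fun M hM => ⟨⟨M, hM.1⟩, Subtype.ext hM.2⟩⟩

end Chains

/-- the number of maximal chains of `B_n(q)` whose label sequence is
`σ(1), ..., σ(n)` equals `q^{inv σ}`. -/
theorem card_chains_with_label (F : Type*) [Field F] [Fintype F] (n : ℕ)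
    (σ : Equiv.Perm (Fin n)) :
    Nat.card {c : Fin (n + 1) → Submodule F (Fin n → F) //
        c 0 = ⊥ ∧ c (Fin.last n) = ⊤ ∧
        ∀ i : Fin n, c i.castSucc < c i.succ ∧
          Module.finrank F (c i.succ) = Module.finrank F (c i.castSucc) + 1 ∧
          σ i ∈ fSet (c i.succ) ∧ σ i ∉ fSet (c i.castSucc)} =
      Fintype.card F ^ inversions σ := by
  calc _ = Nat.card {M : Fin n → Fin n → F // IsEchelon σ M} :=
        (Nat.card_congr (echelonEquivLabelledChain σ)).symm
    _ = Fintype.card F ^ inversions σ := by rw [card_isEchelon, Nat.card_eq_fintype_card]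
end
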